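/- arXiv:0708.2327 — 14 statements merged into one kernel-verified Lean document; each statement's English description precedes it below -/
import Mathlib

section
/- For any group G, the set Cyc(G) = {y ∈ G | ⟨x,y⟩ is cyclic for all x ∈ G} is a subgroup of G. -/
/-- `Cyc(G)`: the set of `y : G` such that `⟨x, y⟩` is cyclic for all `x : G`. -/
def cycSet (G : Type*) [Group G] : Set G :=
  {y | ∀ x : G, IsCyclic ↥(Subgroup.closure ({x, y} : Set G))}

lemma zpowers_isCyclic {G : Type*} [Group G] (g : G) :
    IsCyclic ↥(Subgroup.zpowers g) :=
  ⟨⟨⟨g, Subgroup.mem_zpowers g⟩, fun ⟨x, hx⟩ => by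
    obtain ⟨n, hn⟩ := hx
    exact ⟨n, Subtype.ext (by simpa using hn)⟩⟩⟩

lemma isCyclic_of_le_zpowers {G : Type*} [Group G] {H : Subgroup G} {g : G}
    (h : H ≤ Subgroup.zpowers g) : IsCyclic ↥H := by
  have : IsCyclic ↥(Subgroup.zpowers g) := zpowers_isCyclic g
  have e := Subgroup.subgroupOfEquivOfLe h
  exact isCyclic_of_surjective e e.surjective

lemma mem_zpowers_of_isCyclic {G : Type*} [Group G] {H : Subgroup G} (hH : IsCyclic ↥H) :
    ∃ g : G, g ∈ H ∧ ∀ x ∈ H, x ∈ Subgroup.zpowers g := by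
  obtain ⟨⟨g, hg⟩, hgen⟩ := hH.exists_generator
  refine ⟨g, hg, fun x hx => ?_⟩
  obtain ⟨n, hn⟩ := hgen ⟨x, hx⟩
  exact ⟨n, by simpa using congrArg Subtype.val hn⟩

/-- For any group `G`, `Cyc(G)` is a subgroup of `G`. -/
theorem cycSet_is_subgroup (G : Type*) [Group G] :
    ∃ H : Subgroup G, (H : Set G) = cycSet G := by
  refine ⟨{ carrier := cycSet G, one_mem' := ?_, mul_mem' := ?_, inv_mem' := ?_ }, rfl⟩
  · rintro y z hy hz x
    obtain ⟨c, hcmem, hc⟩ := mem_zpowers_of_isCyclic (hy x)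
    obtain ⟨d, hdmem, hd⟩ := mem_zpowers_of_isCyclic (hz c)
    have hcd : c ∈ Subgroup.zpowers d :=
      hd c (Subgroup.subset_closure (by simp))
    have hzd : z ∈ Subgroup.zpowers d :=
      hd z (Subgroup.subset_closure (by simp))
    have hxd : x ∈ Subgroup.zpowers d := by
      have := hc x (Subgroup.subset_closure (by simp))
      exact (Subgroup.zpowers_le.mpr hcd) this
    have hyd : y ∈ Subgroup.zpowers d := by
      have := hc y (Subgroup.subset_closure (by simp))
      exact (Subgroup.zpowers_le.mpr hcd) this
    apply isCyclic_of_le_zpowers (g := d)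
    rw [Subgroup.closure_le]
    rintro a (rfl | rfl)
    · exact hxd
    · exact mul_mem hyd hzd
  · intro x
    have h1 : Subgroup.closure ({x, 1} : Set G) = Subgroup.zpowers x := by
      apply le_antisymm
      · rw [Subgroup.closure_le]
        rintro a (rfl | rfl)
        · exact Subgroup.mem_zpowers a
        · exact one_mem _
      · rw [Subgroup.zpowers_le]
        exact Subgroup.subset_closure (by simp)
    rw [h1]
    exact zpowers_isCyclic x
  · intro y hy x
    have h1 : Subgroup.closure ({x, y⁻¹} : Set G) = Subgroup.closure ({x, y} : Set G) := by
      apply le_antisymm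
      · rw [Subgroup.closure_le]
        rintro a (rfl | rfl)
        · exact Subgroup.subset_closure (by simp)
        · exact inv_mem (Subgroup.subset_closure (by simp))
      · rw [Subgroup.closure_le]
        rintro a (rfl | rfl)
        · exact Subgroup.subset_closure (by simp)
        · simpa using inv_mem (Subgroup.subset_closure (show a⁻¹ ∈ ({x, a⁻¹} : Set G) by simp))
    rw [h1]
    exact hy x
end

section
/- Let G be a group, x ∈ G, and D = Cyc_G(x). Then Cyc_D(D) = {d ∈ D | ⟨d,e⟩ is cyclic for all e ∈ D} is a subgroup of G containing x, and every finitely generated subgroup of Cyc_D(D) is cyclic (i.e., Cyc_D(D) is locally cyclic). -/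
/-!
Any two elements of `Cyc_D(D)` generate a cyclic subgroup. A group generated by finitely many
elements, any two of which generate a cyclic subgroup, is abelian, and by the structure theorem a
finitely generated abelian group that is not cyclic maps onto `(ℤ/q)²` for some prime `q`. Under
such a map the generators would land pairwise in common cyclic subgroups, hence all in one line,
because a nonzero vector of an `𝔽_q`-space generates a maximal cyclic subgroup; so the map is not
onto. `Cyc_D(D)` is closed under products and inverses because for `g ∈ ⟨T⟩`, with
`T ⊆ Cyc_D(D)` finite and `e ∈ D`, the group `⟨g, e⟩` lies in `⟨T ∪ {e}⟩`, whose generators are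
again pairwise cyclic.
-/

/-- `Cyc_G(x)`. -/
def cycOf {G : Type*} [Group G] (x : G) : Set G :=
  {y | IsCyclic ↥(Subgroup.closure ({x, y} : Set G))}

/-- `Cyc_D(D)` for `D = Cyc_G(x)`. -/
def cycDD {G : Type*} [Group G] (x : G) : Set G :=
  {d ∈ cycOf x | ∀ e ∈ cycOf x, IsCyclic ↥(Subgroup.closure ({d, e} : Set G))}

open Function
open scoped DirectSum

section ZModVectorSpace

open AddSubgroup

theorem mem_zmultiples_zsmul_of_zsmul_ne_zero (q : ℕ) [Fact q.Prime] {V : Type*}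
    [AddCommGroup V] [Module (ZMod q) V] {c : V} {m : ℤ} (hm : m • c ≠ 0) :
    c ∈ zmultiples (m • c) := by
  have ht : (m : ZMod q) ≠ 0 := by
    rintro h
    exact hm (by rw [← Int.cast_smul_eq_zsmul (ZMod q), h, zero_smul])
  refine ⟨((m : ZMod q)⁻¹).val, ?_⟩
  change ((((m : ZMod q)⁻¹).val : ℕ) : ℤ) • m • c = c
  rw [natCast_zsmul, ← Nat.cast_smul_eq_nsmul (ZMod q), ZMod.natCast_zmod_val,
    ← Int.cast_smul_eq_zsmul (ZMod q), smul_smul, inv_mul_cancel₀ ht, one_smul]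

theorem exists_subset_zmultiples_of_pairwise (q : ℕ) [Fact q.Prime] {V : Type*}
    [AddCommGroup V] [Module (ZMod q) V] {T : Set V}
    (hT : ∀ u ∈ T, ∀ v ∈ T, ∃ c, u ∈ zmultiples c ∧ v ∈ zmultiples c) :
    ∃ c : V, T ⊆ zmultiples c := by
  by_cases h : ∃ u ∈ T, u ≠ 0
  · obtain ⟨u, hu, hu0⟩ := h
    refine ⟨u, fun v hv => ?_⟩
    obtain ⟨c, ⟨m, rfl⟩, ⟨k, rfl⟩⟩ := hT u hu v hv
    exact zsmul_mem (mem_zmultiples_zsmul_of_zsmul_ne_zero q hu0) k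
  · push Not at h
    exact ⟨0, fun v hv => by simp [h v hv]⟩

theorem not_isAddCyclic_zmod_prod {q : ℕ} (hq : q.Prime) : ¬ IsAddCyclic (ZMod q × ZMod q) := by
  intro _
  have : NeZero q := ⟨hq.ne_zero⟩
  have := coprime_card_of_isAddCyclic_prod (ZMod q) (ZMod q)
  rw [Nat.card_zmod, Nat.coprime_self] at this
  exact hq.one_lt.ne' this

end ZModVectorSpace

theorem AddMonoidHom.prod_surjective_of_dual {A : Type*} [AddCommGroup A] {q : ℕ}
    (f g : A →+ ZMod q) {a b : A} (hfa : f a = 1) (hfb : f b = 0) (hga : g a = 0)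
    (hgb : g b = 1) : Function.Surjective (f.prod g) := by
  rintro ⟨u, v⟩
  obtain ⟨m, rfl⟩ := ZMod.intCast_surjective u
  obtain ⟨k, rfl⟩ := ZMod.intCast_surjective v
  exact ⟨m • a + k • b, by simp [hfa, hfb, hga, hgb]⟩

theorem isAddCyclic_directSum_zmod {ι : Type*} [Fintype ι] (a : ι → ℕ)
    (ha : Pairwise (Nat.Coprime on a)) : IsAddCyclic (⨁ i, ZMod (a i)) :=
  isAddCyclic_of_surjective
    (((DirectSum.linearEquivFunOnFintype ℤ ι _).symm.toAddEquiv.toAddMonoidHom).comp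
      (ZMod.prodEquivPi a ha).toAddMonoidHom)
    ((DirectSum.linearEquivFunOnFintype ℤ ι _).symm.surjective.comp
      (ZMod.prodEquivPi a ha).surjective)

noncomputable section

variable {ι : Type} (n : ℕ) (p e : ι → ℕ)

abbrev FreeProdTorsion : Type := (Fin n →₀ ℤ) × ⨁ i, ZMod (p i ^ e i)

variable {n p e}

namespace FreeProdTorsion

def intCoord (q : ℕ) (k : Fin n) : FreeProdTorsion n p e →+ ZMod q :=
  ((Int.castAddHom (ZMod q)).comp (Finsupp.applyAddHom k)).comp (AddMonoidHom.fst _ _)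

def torsionCoord (i : ι) {q : ℕ} (hq : q ∣ p i ^ e i) : FreeProdTorsion n p e →+ ZMod q :=
  ((ZMod.castHom hq (ZMod q)).toAddMonoidHom.comp (DFinsupp.evalAddMonoidHom i)).comp
    (AddMonoidHom.snd _ _)

@[simp] theorem intCoord_apply (q : ℕ) (k : Fin n) (x : FreeProdTorsion n p e) :
    intCoord q k x = x.1 k := rfl

@[simp] theorem torsionCoord_apply (i : ι) {q : ℕ} (hq : q ∣ p i ^ e i)
    (x : FreeProdTorsion n p e) : torsionCoord i hq x = ZMod.castHom hq (ZMod q) (x.2 i) := rfl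

theorem exists_surjective_of_two_le (hn : 2 ≤ n) :
    ∃ f : FreeProdTorsion n p e →+ ZMod 2 × ZMod 2, Surjective f := by
  let k₀ : Fin n := ⟨0, by omega⟩
  let k₁ : Fin n := ⟨1, by omega⟩
  have hk : k₀ ≠ k₁ := by simp [k₀, k₁, Fin.ext_iff]
  exact ⟨_, AddMonoidHom.prod_surjective_of_dual (intCoord 2 k₀) (intCoord 2 k₁)
    (a := (Finsupp.single k₀ 1, 0)) (b := (Finsupp.single k₁ 1, 0))
    (by simp) (by simp [hk]) (by simp [hk.symm]) (by simp)⟩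

theorem exists_surjective_of_one_le {i : ι} (hn : 1 ≤ n) (he : e i ≠ 0) :
    ∃ f : FreeProdTorsion n p e →+ ZMod (p i) × ZMod (p i), Surjective f := by
  classical
  let k₀ : Fin n := ⟨0, by omega⟩
  exact ⟨_, AddMonoidHom.prod_surjective_of_dual (intCoord (p i) k₀)
    (torsionCoord i (dvd_pow_self (p i) he))
    (a := (Finsupp.single k₀ 1, 0)) (b := (0, DirectSum.of _ i 1))
    (by simp) (by simp) (by simp) (by simp [-ZMod.castHom_apply])⟩

theorem exists_surjective_of_prime_eq {i j : ι} (hij : i ≠ j) (hi : e i ≠ 0)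
    (hj : e j ≠ 0) (hp : p i = p j) :
    ∃ f : FreeProdTorsion n p e →+ ZMod (p i) × ZMod (p i), Surjective f := by
  classical
  exact ⟨_, AddMonoidHom.prod_surjective_of_dual (torsionCoord i (dvd_pow_self (p i) hi))
    (torsionCoord j (hp ▸ dvd_pow_self (p j) hj))
    (a := (0, DirectSum.of _ i 1)) (b := (0, DirectSum.of _ j 1))
    (by simp [-ZMod.castHom_apply]) (by simp [DirectSum.of_eq_of_ne _ _ _ hij])
    (by simp [DirectSum.of_eq_of_ne _ _ _ hij.symm]) (by simp [-ZMod.castHom_apply])⟩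

theorem isAddCyclic_of_forall_not_surjective [Fintype ι] (hp : ∀ i, (p i).Prime)
    (h : ∀ q, q.Prime → ∀ f : FreeProdTorsion n p e →+ ZMod q × ZMod q, ¬ Surjective f) :
    IsAddCyclic (FreeProdTorsion n p e) := by
  have hn : n ≤ 1 := by
    by_contra! hn
    obtain ⟨f, hf⟩ := exists_surjective_of_two_le (p := p) (e := e) hn
    exact h 2 Nat.prime_two f hf
  interval_cases n
  · have hcop : Pairwise (Nat.Coprime on fun i => p i ^ e i) := by
      intro i j hij
      rcases eq_or_ne (e i) 0 with hi | hi
      · simp [Function.onFun, hi]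
      rcases eq_or_ne (e j) 0 with hj | hj
      · simp [Function.onFun, hj]
      refine Nat.Coprime.pow _ _ ((Nat.coprime_primes (hp i) (hp j)).2 fun hpij => ?_)
      obtain ⟨f, hf⟩ := exists_surjective_of_prime_eq (n := 0) hij hi hj hpij
      exact h _ (hp i) f hf
    have := isAddCyclic_directSum_zmod _ hcop
    exact isAddCyclic_of_surjective AddEquiv.uniqueProd.symm AddEquiv.uniqueProd.symm.surjective
  · have he : ∀ i, e i = 0 := fun i => by
      by_contra hi
      obtain ⟨f, hf⟩ := exists_surjective_of_one_le (n := 1) le_rfl hi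
      exact h _ (hp i) f hf
    have (i : ι) : Subsingleton (ZMod (p i ^ e i)) := by rw [he i, pow_zero]; infer_instance
    refine isAddCyclic_of_surjective
      ((AddMonoidHom.inl _ _).comp (Finsupp.singleAddHom (0 : Fin 1))) fun x => ?_
    exact ⟨x.1 0, Prod.ext (Finsupp.unique_single x.1).symm (Subsingleton.elim _ _)⟩

end FreeProdTorsion
end

theorem isAddCyclic_of_forall_not_surjective_zmod_prod (A : Type*) [AddCommGroup A]
    [AddGroup.FG A] (h : ∀ q, q.Prime → ∀ f : A →+ ZMod q × ZMod q, ¬ Surjective f) :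
    IsAddCyclic A := by
  obtain ⟨n, ι, _, p, hp, e, ⟨F⟩⟩ := AddCommGroup.equiv_free_prod_directSum_zmod A
  have : IsAddCyclic (FreeProdTorsion n p e) :=
    FreeProdTorsion.isAddCyclic_of_forall_not_surjective hp
      fun q hq f hf => h q hq (f.comp F) (hf.comp F.surjective)
  exact isAddCyclic_of_surjective F.symm F.symm.surjective

open Subgroup

theorem isAddCyclic_of_surjective_of_pairwise {K : Type*} [Group K] {t : Set K}
    (ht : closure t = ⊤) (hpair : ∀ a ∈ t, ∀ b ∈ t, ∃ c, a ∈ zpowers c ∧ b ∈ zpowers c)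
    (q : ℕ) [Fact q.Prime] {V : Type*} [AddCommGroup V] [Module (ZMod q) V]
    (f : Additive K →+ V) (hf : Surjective f) : IsAddCyclic V := by
  let g : K → V := fun k => f (Additive.ofMul k)
  have hg : ∀ (c : K) (m : ℤ), m • g c = g (c ^ m) := by simp [g, ofMul_zpow]
  obtain ⟨v, hv⟩ := exists_subset_zmultiples_of_pairwise q (T := g '' t) (by
    rintro _ ⟨a, ha, rfl⟩ _ ⟨b, hb, rfl⟩
    obtain ⟨c, ⟨m, rfl⟩, ⟨k, rfl⟩⟩ := hpair a ha b hb
    exact ⟨g c, ⟨m, hg c m⟩, ⟨k, hg c k⟩⟩)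
  have hgv : ∀ k : K, g k ∈ AddSubgroup.zmultiples v := fun k => by
    induction ht ▸ mem_top k using closure_induction with
    | mem a ha => exact hv ⟨a, ha, rfl⟩
    | one => simp [g]
    | mul a b _ _ ha hb => simpa [g] using add_mem ha hb
    | inv a _ ha => simpa [g] using neg_mem ha
  refine ⟨v, fun w => ?_⟩
  obtain ⟨k, rfl⟩ := hf w
  exact hgv (Additive.toMul k)

section Pairwise

variable {G : Type*} [Group G]

theorem exists_zpowers_of_isCyclic_closure_pair {a b : G} (h : IsCyclic (closure {a, b})) :
    ∃ c ∈ closure {a, b}, a ∈ zpowers c ∧ b ∈ zpowers c := by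
  obtain ⟨c, hc⟩ := (Subgroup.isCyclic_iff_exists_zpowers_eq_top _).1 h
  rw [← hc]
  exact ⟨c, mem_zpowers c, hc ▸ subset_closure (by simp), hc ▸ subset_closure (by simp)⟩

open IsMulCommutative in
theorem isCyclic_closure_of_pairwise {s : Set G} (hs : s.Finite)
    (hpair : ∀ a ∈ s, ∀ b ∈ s, IsCyclic (closure {a, b})) : IsCyclic (closure s) := by
  have hroot : ∀ a ∈ s, ∀ b ∈ s, ∃ c ∈ closure s, a ∈ zpowers c ∧ b ∈ zpowers c := by
    intro a ha b hb
    obtain ⟨c, hc, hac, hbc⟩ := exists_zpowers_of_isCyclic_closure_pair (hpair a ha b hb)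
    exact ⟨c, closure_mono (Set.pair_subset ha hb) hc, hac, hbc⟩
  have : IsMulCommutative (closure s) := isMulCommutative_closure fun a ha b hb => by
    obtain ⟨c, -, ⟨m, rfl⟩, ⟨k, rfl⟩⟩ := hroot a ha b hb
    exact Commute.zpow_zpow_self c m k
  have : Finite s := hs
  rw [← isAddCyclic_additive_iff]
  refine isAddCyclic_of_forall_not_surjective_zmod_prod _ fun q hq f hf => ?_
  have : Fact q.Prime := ⟨hq⟩
  refine not_isAddCyclic_zmod_prod hq
    (isAddCyclic_of_surjective_of_pairwise closure_closure_coe_preimage ?_ q f hf)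
  intro a ha b hb
  obtain ⟨c, hc, ⟨m, hm⟩, ⟨k, hk⟩⟩ := hroot a ha b hb
  exact ⟨⟨c, hc⟩, ⟨m, Subtype.ext hm⟩, ⟨k, Subtype.ext hk⟩⟩

end Pairwise

section CycDD

variable {G : Type*} [Group G] {x : G}

theorem isCyclic_closure_pair_self (a : G) : IsCyclic (closure {a, a}) := by
  rw [Set.pair_eq_singleton, ← zpowers_eq_closure]
  infer_instance

theorem self_mem_cycOf (x : G) : x ∈ cycOf x :=
  isCyclic_closure_pair_self x

theorem self_mem_cycDD (x : G) : x ∈ cycDD x :=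
  ⟨self_mem_cycOf x, fun _ he => he⟩

theorem isCyclic_closure_pair_of_mem_cycDD {a b : G} (ha : a ∈ cycDD x) (hb : b ∈ cycDD x) :
    IsCyclic (closure {a, b}) :=
  ha.2 b hb.1

theorem isCyclic_closure_insert_of_subset_cycDD {T : Set G} (hT : T.Finite) (hTD : T ⊆ cycDD x)
    {e : G} (he : e ∈ cycOf x) : IsCyclic (closure (insert e T)) := by
  refine isCyclic_closure_of_pairwise (hT.insert e) ?_
  have hTe : ∀ a ∈ T, IsCyclic (closure {a, e}) := fun a ha => (hTD ha).2 e he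
  rintro a (rfl | ha) b (rfl | hb)
  · exact isCyclic_closure_pair_self _
  · rw [Set.pair_comm]
    exact hTe b hb
  · exact hTe a ha
  · exact isCyclic_closure_pair_of_mem_cycDD (hTD ha) (hTD hb)

theorem mem_cycDD_of_mem_closure {T : Set G} (hT : T.Finite) (hTD : T ⊆ cycDD x) {g : G}
    (hg : g ∈ closure T) : g ∈ cycDD x := by
  have hgD : ∀ e ∈ cycOf x, IsCyclic (closure {g, e}) := fun e he =>
    have := isCyclic_closure_insert_of_subset_cycDD hT hTD he
    isCyclic_of_le <| (closure_le _).2 <| Set.insert_subset_iff.2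
      ⟨closure_mono (Set.subset_insert e T) hg,
        Set.singleton_subset_iff.2 (subset_closure (Set.mem_insert e T))⟩
  have hgx := hgD x (self_mem_cycOf x)
  rw [Set.pair_comm] at hgx
  exact ⟨hgx, hgD⟩

def cycDDSubgroup (x : G) : Subgroup G where
  carrier := cycDD x
  one_mem' := mem_cycDD_of_mem_closure Set.finite_empty (Set.empty_subset _) (one_mem _)
  mul_mem' {a b} ha hb := mem_cycDD_of_mem_closure (Set.toFinite {a, b}) (Set.pair_subset ha hb)
    (mul_mem (subset_closure (by simp)) (subset_closure (by simp)))
  inv_mem' {a} ha := mem_cycDD_of_mem_closure (Set.finite_singleton a)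
    (Set.singleton_subset_iff.2 ha) (inv_mem (subset_closure rfl))

end CycDD

/-- For `D = Cyc_G(x)`, `Cyc_D(D)` is a subgroup of `G` containing `x`,
and it is locally cyclic. -/
theorem cycDD_locally_cyclic_subgroup {G : Type*} [Group G] (x : G) :
    (∃ H : Subgroup G, (H : Set G) = cycDD x) ∧ x ∈ cycDD x ∧
    (∀ S : Finset G, (S : Set G) ⊆ cycDD x →
      IsCyclic ↥(Subgroup.closure (S : Set G))) :=
  ⟨⟨cycDDSubgroup x, rfl⟩, self_mem_cycDD x, fun S hS =>
    isCyclic_closure_of_pairwise S.finite_toSet fun _ ha _ hb =>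
      isCyclic_closure_pair_of_mem_cycDD (hS ha) (hS hb)⟩
end

section
/- For any group G and x ∈ G, the cyclicizer of the coset x·Cyc(G) in the quotient G/Cyc(G) equals Cyc_G(x)/Cyc(G); in particular Cyc(G/Cyc(G)) is trivial. -/
open Subgroup

private lemma zpowersIsCyclic {G : Type*} [Group G] (e : G) : IsCyclic ↥(zpowers e) := by
  refine ⟨⟨⟨e, mem_zpowers e⟩, fun x => ?_⟩⟩
  obtain ⟨k, hk⟩ := x.2
  exact ⟨k, Subtype.ext (by simpa using hk)⟩

private lemma memZpowersPair {G : Type*} [Group G] {H : Subgroup G} (hH : IsCyclic ↥H)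
    {a b : G} (ha : a ∈ H) (hb : b ∈ H) :
    ∃ d : G, a ∈ zpowers d ∧ b ∈ zpowers d := by
  obtain ⟨g, hg⟩ := hH.exists_generator
  refine ⟨(g : G), ?_, ?_⟩
  · obtain ⟨k, hk⟩ := hg ⟨a, ha⟩
    exact ⟨k, by simpa using congrArg Subtype.val hk⟩
  · obtain ⟨k, hk⟩ := hg ⟨b, hb⟩
    exact ⟨k, by simpa using congrArg Subtype.val hk⟩

private lemma keyLift {G : Type*} [Group G] (N : Subgroup G) [N.Normal]
    (hN : (N : Set G) = cycSet G) {x y : G}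
    (hq : IsCyclic ↥(Subgroup.closure ({(QuotientGroup.mk x : G ⧸ N), QuotientGroup.mk y} :
      Set (G ⧸ N)))) :
    IsCyclic ↥(Subgroup.closure ({x, y} : Set G)) := by
  obtain ⟨g, hg⟩ := hq.exists_generator
  obtain ⟨c, hc⟩ := QuotientGroup.mk_surjective (g : G ⧸ N)
  have hxm : (QuotientGroup.mk x : G ⧸ N) ∈ Subgroup.closure
      ({(QuotientGroup.mk x : G ⧸ N), QuotientGroup.mk y} : Set (G ⧸ N)) :=
    subset_closure (Set.mem_insert _ _)
  have hym : (QuotientGroup.mk y : G ⧸ N) ∈ Subgroup.closure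
      ({(QuotientGroup.mk x : G ⧸ N), QuotientGroup.mk y} : Set (G ⧸ N)) :=
    subset_closure (Set.mem_insert_of_mem _ rfl)
  obtain ⟨a, hax⟩ := hg ⟨_, hxm⟩
  obtain ⟨b, hby⟩ := hg ⟨_, hym⟩
  have hax' : (QuotientGroup.mk (c ^ a) : G ⧸ N) = QuotientGroup.mk x := by
    have := congrArg Subtype.val hax
    simpa [← hc] using this
  have hby' : (QuotientGroup.mk (c ^ b) : G ⧸ N) = QuotientGroup.mk y := by
    have := congrArg Subtype.val hby
    simpa [← hc] using this
  set n1 : G := (c ^ a)⁻¹ * x with hn1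
  set n2 : G := (c ^ b)⁻¹ * y with hn2
  have hn1N : n1 ∈ N := QuotientGroup.eq.mp hax'
  have hn2N : n2 ∈ N := QuotientGroup.eq.mp hby'
  have hn1cyc : n1 ∈ cycSet G := hN ▸ hn1N
  have hn2cyc : n2 ∈ cycSet G := hN ▸ hn2N
  -- find d with c, n1 ∈ zpowers d
  obtain ⟨d, hcd, hn1d⟩ := memZpowersPair (hn1cyc c)
    (subset_closure (Set.mem_insert _ _)) (subset_closure (Set.mem_insert_of_mem _ rfl))
  obtain ⟨e, hde, hn2e⟩ := memZpowersPair (hn2cyc d)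
    (subset_closure (Set.mem_insert _ _)) (subset_closure (Set.mem_insert_of_mem _ rfl))
  have hce : c ∈ zpowers e := (zpowers_le.mpr hde) hcd
  have hn1e : n1 ∈ zpowers e := (zpowers_le.mpr hde) hn1d
  have hxe : x ∈ zpowers e := by
    have : x = c ^ a * n1 := by rw [hn1]; group
    rw [this]; exact mul_mem (zpow_mem hce a) hn1e
  have hye : y ∈ zpowers e := by
    have : y = c ^ b * n2 := by rw [hn2]; group
    rw [this]; exact mul_mem (zpow_mem hce b) hn2e
  have hle : Subgroup.closure ({x, y} : Set G) ≤ zpowers e := by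
    rw [closure_le]
    rintro z (rfl | rfl)
    · exact hxe
    · exact hye
  haveI := zpowersIsCyclic e
  exact Subgroup.isCyclic_of_le hle

private lemma keyPush {G : Type*} [Group G] (N : Subgroup G) [N.Normal] {x y : G}
    (h : IsCyclic ↥(Subgroup.closure ({x, y} : Set G))) :
    IsCyclic ↥(Subgroup.closure ({(QuotientGroup.mk x : G ⧸ N), QuotientGroup.mk y} :
      Set (G ⧸ N))) := by
  have heq : Subgroup.closure ({(QuotientGroup.mk x : G ⧸ N), QuotientGroup.mk y} :
      Set (G ⧸ N)) = (Subgroup.closure ({x, y} : Set G)).map (QuotientGroup.mk' N) := by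
    rw [MonoidHom.map_closure]
    congr 1
    simp [Set.image_insert_eq]
  rw [heq]
  haveI := h
  exact isCyclic_of_surjective _ (MonoidHom.subgroupMap_surjective (QuotientGroup.mk' N) _)

/-- If `N` is a normal subgroup with underlying set `Cyc(G)`, then for every
`x : G`, `Cyc_{G/N}(xN) = Cyc_G(x)/N`; in particular `Cyc(G/N) = 1`. -/
theorem cycOf_quotient {G : Type*} [Group G] (N : Subgroup G) [N.Normal]
    (hN : (N : Set G) = cycSet G) :
    (∀ x : G, cycOf (QuotientGroup.mk x : G ⧸ N) =
      QuotientGroup.mk '' cycOf x) ∧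
    cycSet (G ⧸ N) = ({1} : Set (G ⧸ N)) := by
  constructor
  · intro x
    ext q
    constructor
    · intro hq
      obtain ⟨y, rfl⟩ := QuotientGroup.mk_surjective q
      exact ⟨y, keyLift N hN hq, rfl⟩
    · rintro ⟨y, hy, rfl⟩
      exact keyPush N hy
  · ext q
    simp only [Set.mem_singleton_iff]
    constructor
    · intro hq
      obtain ⟨y, rfl⟩ := QuotientGroup.mk_surjective q
      have hy : y ∈ cycSet G := fun x => keyLift N hN (hq (QuotientGroup.mk x))
      have hyN : y ∈ N := by rw [← SetLike.mem_coe, hN]; exact hy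
      exact (QuotientGroup.eq_one_iff y).mpr hyN
    · rintro rfl
      intro p
      have hle : Subgroup.closure ({p, 1} : Set (G ⧸ N)) ≤ zpowers p := by
        rw [closure_le]
        rintro z hz
        simp only [Set.mem_insert_iff, Set.mem_singleton_iff] at hz
        rcases hz with h | h
        · rw [h]; exact mem_zpowers p
        · rw [h]; exact one_mem _
      haveI := zpowersIsCyclic p
      exact Subgroup.isCyclic_of_le hle
end

section
/- Let G be a group that contains both an element of infinite order and a non-trivial element of finite order. Then Cyc(G) = 1. -/
lemma isCyclic_zpowers' {G : Type*} [Group G] (x : G) : IsCyclic ↥(Subgroup.zpowers x) := by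
  refine ⟨⟨x, Subgroup.mem_zpowers x⟩, ?_⟩
  rintro ⟨z, hz⟩
  obtain ⟨n, hn⟩ := Subgroup.mem_zpowers_iff.1 hz
  exact Subgroup.mem_zpowers_iff.2 ⟨n, Subtype.ext (by simpa using hn)⟩

lemma aux_cyc {G : Type*} [Group G] {H : Subgroup G} (hc : IsCyclic H)
    {a b : G} (ha : a ∈ H) (hb : b ∈ H) (hao : ¬ IsOfFinOrder a)
    (hbo : IsOfFinOrder b) : b = 1 := by
  obtain ⟨g, hg⟩ := hc.exists_generator
  obtain ⟨n, hn⟩ := hg ⟨a, ha⟩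
  obtain ⟨m, hm⟩ := hg ⟨b, hb⟩
  have hn' : (g : G) ^ n = a := congrArg Subtype.val hn
  have hm' : (g : G) ^ m = b := congrArg Subtype.val hm
  have hgo : ¬ IsOfFinOrder (g : G) := by
    intro h
    exact hao (hn' ▸ h.zpow)
  have hinj : Function.Injective fun k : ℤ => (g : G) ^ k :=
    injective_zpow_iff_not_isOfFinOrder.2 hgo
  obtain ⟨k, hk, hbk⟩ := isOfFinOrder_iff_pow_eq_one.1 hbo
  have : (g : G) ^ (m * (k : ℤ)) = (g : G) ^ (0 : ℤ) := by
    rw [zpow_mul, hm', zpow_zero, zpow_natCast, hbk]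
  have hmk : m * (k : ℤ) = 0 := hinj this
  have hm0 : m = 0 := by
    rcases mul_eq_zero.1 hmk with h | h
    · exact h
    · exact absurd h (by exact_mod_cast hk.ne')
  rw [← hm', hm0, zpow_zero]

/-- If `G` has an element of infinite order and a non-trivial element of finite
order, then `Cyc(G) = 1`. -/
theorem cycSet_trivial_of_mixed {G : Type*} [Group G]
    (hx : ∃ x : G, ¬ IsOfFinOrder x) (hy : ∃ y : G, y ≠ 1 ∧ IsOfFinOrder y) :
    cycSet G = ({1} : Set G) := by
  obtain ⟨x, hx⟩ := hx
  obtain ⟨t, ht1, hto⟩ := hy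
  ext y
  simp only [Set.mem_singleton_iff]
  constructor
  · intro hyc
    -- first, y has finite order
    have hyfin : IsOfFinOrder y := by
      by_contra hyo
      have hcyc := hyc t
      have ht : t ∈ Subgroup.closure ({t, y} : Set G) :=
        Subgroup.subset_closure (by simp)
      have hy' : y ∈ Subgroup.closure ({t, y} : Set G) :=
        Subgroup.subset_closure (by simp)
      exact ht1 (aux_cyc hcyc hy' ht hyo hto)
    have hcyc := hyc x
    have hxmem : x ∈ Subgroup.closure ({x, y} : Set G) :=
      Subgroup.subset_closure (by simp)
    have hymem : y ∈ Subgroup.closure ({x, y} : Set G) :=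
      Subgroup.subset_closure (by simp)
    exact aux_cyc hcyc hxmem hymem hx hyfin
  · rintro rfl x
    have : Subgroup.closure ({x, 1} : Set G) = Subgroup.zpowers x := by
      rw [Subgroup.zpowers_eq_closure]
      refine le_antisymm (Subgroup.closure_le _ |>.2 ?_) (Subgroup.closure_mono (by simp))
      rintro z (rfl | rfl)
      · exact Subgroup.subset_closure rfl
      · exact one_mem _
    rw [this]
    exact isCyclic_zpowers' x
end

section
/- Let G be a torsion-free group with Cyc(G) ≠ 1. Then Cyc(G) = Z(G). Moreover, if Z(G) is divisible, then G is locally cyclic (every finitely generated subgroup is cyclic). -/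
/-!
In a torsion-free group, commuting elements with a common nontrivial power `c ^ k = d ^ q` lie in
a common cyclic subgroup: roots of commuting elements are unique, which reduces to coprime `k, q`,
and then a Bézout combination of `c` and `d` generates both. Given `y ≠ 1` in `Cyc(G)`, a central
`z` and any `x` share nontrivial powers with `y` through the generators of `⟨z, y⟩` and `⟨x, y⟩`;
the first generator is central, so `⟨x, z⟩` is cyclic. If `Z(G)` is divisible, the generator `c`
of `⟨x, y⟩` has a central power `c ^ n`, whose central `n`-th root must be `c` itself; so `G` is
abelian, `Cyc(G) = G`, and finitely generated subgroups are cyclic by induction on the number of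
generators.
-/

open Subgroup

section

variable {G : Type*} [Group G]

theorem Commute.eq_of_zpow_eq_zpow_of_torsionFree (htf : ∀ x : G, x ≠ 1 → ¬ IsOfFinOrder x)
    {a b : G} (hab : Commute a b) {n : ℤ} (hn : n ≠ 0) (h : a ^ n = b ^ n) : a = b := by
  by_contra hne
  refine htf (a * b⁻¹) (mul_inv_eq_one.not.mpr hne)
    (isOfFinOrder_iff_zpow_eq_one.mpr ⟨n, hn, ?_⟩)
  rw [hab.inv_right.mul_zpow, inv_zpow, h, mul_inv_cancel]

theorem Commute.exists_zpow_eq_of_zpow_eq_zpow_of_isCoprime {c d : G} (hcd : Commute c d)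
    {k q : ℤ} (hkq : IsCoprime k q) (h : c ^ k = d ^ q) : ∃ e : G, e ^ q = c ∧ e ^ k = d := by
  obtain ⟨u, v, huv⟩ := hkq
  have hvu : Commute (c ^ v) (d ^ u) := hcd.zpow_zpow v u
  refine ⟨c ^ v * d ^ u, ?_, ?_⟩
  · calc (c ^ v * d ^ u) ^ q = c ^ (v * q) * (d ^ q) ^ u := by
          rw [hvu.mul_zpow, ← zpow_mul, ← zpow_mul, ← zpow_mul, mul_comm u q]
      _ = c ^ (v * q + k * u) := by rw [← h, ← zpow_mul, zpow_add]
      _ = c := by rw [show v * q + k * u = 1 by linear_combination huv, zpow_one]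
  · calc (c ^ v * d ^ u) ^ k = (c ^ k) ^ v * d ^ (u * k) := by
          rw [hvu.mul_zpow, ← zpow_mul, ← zpow_mul, ← zpow_mul, mul_comm v k]
      _ = d ^ (q * v + u * k) := by rw [h, ← zpow_mul, zpow_add]
      _ = d := by rw [show q * v + u * k = 1 by linear_combination huv, zpow_one]

theorem Commute.exists_mem_zpowers_of_zpow_eq_zpow (htf : ∀ x : G, x ≠ 1 → ¬ IsOfFinOrder x)
    {c d : G} (hcd : Commute c d) {k q : ℤ} (hk : k ≠ 0) (h : c ^ k = d ^ q) :
    ∃ e : G, c ∈ zpowers e ∧ d ∈ zpowers e := by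
  obtain ⟨g, k', q', hg, hcop, rfl, rfl⟩ := Int.exists_gcd_one' (Int.gcd_pos_of_ne_zero_left q hk)
  have hroot : c ^ k' = d ^ q' :=
    (hcd.zpow_zpow k' q').eq_of_zpow_eq_zpow_of_torsionFree htf (n := g) (by omega)
      (by rw [← zpow_mul, ← zpow_mul, h])
  obtain ⟨e, hc, hd⟩ :=
    hcd.exists_zpow_eq_of_zpow_eq_zpow_of_isCoprime (Int.isCoprime_iff_gcd_eq_one.mpr hcop) hroot
  exact ⟨e, ⟨q', hc⟩, ⟨k', hd⟩⟩

theorem isCyclic_closure_pair_of_mem_zpowers {x y c : G} (hx : x ∈ zpowers c)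
    (hy : y ∈ zpowers c) : IsCyclic (closure ({x, y} : Set G)) :=
  isCyclic_of_le ((closure_le _).mpr (Set.insert_subset hx (Set.singleton_subset_iff.mpr hy)))

theorem exists_mem_zpowers_of_isCyclic_closure_pair {x y : G}
    (h : IsCyclic (closure ({x, y} : Set G))) :
    ∃ c ∈ closure ({x, y} : Set G), x ∈ zpowers c ∧ y ∈ zpowers c := by
  obtain ⟨c, hc⟩ := (Subgroup.isCyclic_iff_exists_zpowers_eq_top _).mp h
  exact ⟨c, hc ▸ mem_zpowers c, hc ▸ subset_closure (by simp), hc ▸ subset_closure (by simp)⟩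

theorem one_mem_cycSet : (1 : G) ∈ cycSet G := fun x =>
  isCyclic_closure_pair_of_mem_zpowers (mem_zpowers x) (one_mem _)

theorem cycSet_subset_center : cycSet G ⊆ center G := fun y hy => by
  refine mem_center_iff.mpr fun x => ?_
  obtain ⟨c, -, ⟨m, rfl⟩, ⟨n, rfl⟩⟩ := exists_mem_zpowers_of_isCyclic_closure_pair (hy x)
  exact (Commute.zpow_zpow_self c m n).eq

theorem center_subset_cycSet (htf : ∀ x : G, x ≠ 1 → ¬ IsOfFinOrder x) {y : G}
    (hy : y ∈ cycSet G) (hy1 : y ≠ 1) : (center G : Set G) ⊆ cycSet G := by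
  intro z hz x
  obtain ⟨c, -, hx, ⟨n, hn⟩⟩ := exists_mem_zpowers_of_isCyclic_closure_pair (hy x)
  obtain ⟨d, hd, hzd, ⟨n', hn'⟩⟩ := exists_mem_zpowers_of_isCyclic_closure_pair (hy z)
  have hd_center : d ∈ center G := (closure_le _).mpr
    (Set.insert_subset hz (Set.singleton_subset_iff.mpr (cycSet_subset_center hy))) hd
  have hcd : Commute c d := mem_center_iff.mp hd_center c
  have hn0 : n ≠ 0 := by rintro rfl; exact hy1 (hn ▸ zpow_zero c)
  obtain ⟨e, hce, hde⟩ := hcd.exists_mem_zpowers_of_zpow_eq_zpow htf hn0 (hn.trans hn'.symm)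
  exact isCyclic_closure_pair_of_mem_zpowers (zpowers_le.mpr hce hx) (zpowers_le.mpr hde hzd)

section DivisibleCenter

variable (htf : ∀ x : G, x ≠ 1 → ¬ IsOfFinOrder x)
  (hdiv : ∀ a ∈ center G, ∀ n : ℕ, n ≠ 0 → ∃ b ∈ center G, b ^ n = a)
include htf hdiv

theorem mem_center_of_pow_mem_center {c : G} {n : ℕ} (hn : n ≠ 0) (hc : c ^ n ∈ center G) :
    c ∈ center G := by
  obtain ⟨b, hb, hbc⟩ := hdiv _ hc n hn
  have hcb : Commute c b := mem_center_iff.mp hb c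
  have : c = b := hcb.eq_of_zpow_eq_zpow_of_torsionFree htf (n := n) (by exact_mod_cast hn)
    (by rw [zpow_natCast, zpow_natCast, hbc])
  exact this ▸ hb

theorem center_eq_top_of_divisible {y : G} (hy : y ∈ cycSet G) (hy1 : y ≠ 1) :
    center G = ⊤ := by
  refine (eq_top_iff' _).mpr fun x => ?_
  obtain ⟨c, -, ⟨m, rfl⟩, ⟨n, rfl⟩⟩ := exists_mem_zpowers_of_isCyclic_closure_pair (hy x)
  have hn0 : n ≠ 0 := by rintro rfl; exact hy1 (zpow_zero c)
  have hcn : c ^ n.natAbs ∈ center G := by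
    rw [← zpow_natCast, ← Int.sign_mul_self_eq_natAbs, mul_comm, zpow_mul]
    exact zpow_mem (cycSet_subset_center hy) _
  exact zpow_mem (mem_center_of_pow_mem_center htf hdiv (Int.natAbs_ne_zero.mpr hn0) hcn) m

end DivisibleCenter

theorem isCyclic_closure_finset_of_isCyclic_closure_pair
    (h : ∀ x y : G, IsCyclic (closure ({x, y} : Set G))) (S : Finset G) :
    IsCyclic (closure (S : Set G)) := by
  classical
  induction S using Finset.induction_on with
  | empty =>
    rw [Finset.coe_empty, Subgroup.closure_empty]
    infer_instance
  | insert a S _ ih =>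
    obtain ⟨c, hc⟩ := (Subgroup.isCyclic_iff_exists_zpowers_eq_top _).mp ih
    rw [Finset.coe_insert, ← Set.singleton_union, Subgroup.closure_union, ← hc, zpowers_eq_closure,
      ← Subgroup.closure_union, Set.singleton_union]
    exact h a c

end

/-- If `G` is torsion-free and `Cyc(G) ≠ 1`, then `Cyc(G) = Z(G)`; moreover if
`Z(G)` is divisible then `G` is locally cyclic. -/
theorem cycSet_eq_center_of_torsionFree {G : Type*} [Group G]
    (htf : ∀ x : G, x ≠ 1 → ¬ IsOfFinOrder x)
    (hne : cycSet G ≠ ({1} : Set G)) :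
    cycSet G = (Subgroup.center G : Set G) ∧
    ((∀ a ∈ Subgroup.center G, ∀ n : ℕ, n ≠ 0 → ∃ b ∈ Subgroup.center G, b ^ n = a) →
      ∀ S : Finset G, IsCyclic ↥(Subgroup.closure (S : Set G))) := by
  obtain ⟨y, hy, hy1⟩ : ∃ y ∈ cycSet G, y ≠ 1 := by
    by_contra! h
    exact hne (Set.eq_singleton_iff_unique_mem.mpr ⟨one_mem_cycSet, h⟩)
  have hcyc : cycSet G = center G :=
    cycSet_subset_center.antisymm (center_subset_cycSet htf hy hy1)
  refine ⟨hcyc, fun hdiv => isCyclic_closure_finset_of_isCyclic_closure_pair fun x z => ?_⟩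
  have hz : z ∈ cycSet G := hcyc ▸ center_eq_top_of_divisible htf hdiv hy hy1 ▸ mem_top z
  exact hz x
end

section
/- Let G be a group that is not locally cyclic. Then the non-cyclic graph Γ_G is connected and its diameter is at most 3. -/
/-- Adjacency in the non-cyclic graph: distinct elements generating a
non-cyclic subgroup. -/
def ncAdj {G : Type*} [Group G] (x y : G) : Prop :=
  x ≠ y ∧ ¬ IsCyclic ↥(Subgroup.closure ({x, y} : Set G))

section helpers

variable {G : Type*} [Group G]

/-- `zpowers a` is cyclic. -/
lemma zpowers_cyclic (a : G) : IsCyclic (Subgroup.zpowers a) :=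
  isCyclic_of_surjective (zpowersHom G a).rangeRestrict
    (zpowersHom G a).rangeRestrict_surjective

/-- A subgroup contained in a cyclic subgroup is cyclic. -/
lemma isCyclic_of_le' {H K : Subgroup G} (h : H ≤ K) (hK : IsCyclic K) :
    IsCyclic H := by
  haveI := hK
  haveI : IsCyclic (H.subgroupOf K) := Subgroup.isCyclic _
  exact isCyclic_of_surjective (Subgroup.subgroupOfEquivOfLe h)
    (Subgroup.subgroupOfEquivOfLe h).surjective

lemma exists_zpowers_eq {H : Subgroup G} (h : IsCyclic H) :
    ∃ c : G, H = Subgroup.zpowers c := by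
  obtain ⟨⟨c, hcH⟩, hc⟩ := h.exists_generator
  refine ⟨c, le_antisymm ?_ (Subgroup.zpowers_le.2 hcH)⟩
  intro t ht
  obtain ⟨k, hk⟩ := Subgroup.mem_zpowers_iff.1 (hc ⟨t, ht⟩)
  exact Subgroup.mem_zpowers_iff.2 ⟨k, by simpa using congrArg Subtype.val hk⟩

lemma closure_pair_le {a b : G} {H : Subgroup G} (ha : a ∈ H) (hb : b ∈ H) :
    Subgroup.closure {a, b} ≤ H :=
  (Subgroup.closure_le _).2 (by simp [Set.insert_subset_iff, ha, hb])

lemma mem_closure_pair_left (a b : G) : a ∈ Subgroup.closure ({a, b} : Set G) :=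
  Subgroup.subset_closure (by simp)

lemma mem_closure_pair_right (a b : G) : b ∈ Subgroup.closure ({a, b} : Set G) :=
  Subgroup.subset_closure (by simp)

lemma ne_of_noncyc {a b : G}
    (h : ¬ IsCyclic ↥(Subgroup.closure ({a, b} : Set G))) : a ≠ b := by
  rintro rfl
  apply h
  rw [Set.pair_eq_singleton, ← Subgroup.zpowers_eq_closure]
  exact zpowers_cyclic a

lemma not_mem_cycSet {a b : G}
    (h : ¬ IsCyclic ↥(Subgroup.closure ({a, b} : Set G))) : b ∉ cycSet G :=
  fun hb => h (hb a)

end helpers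

/-- For a non locally cyclic group, the non-cyclic graph is connected with
diameter at most 3: any two distinct vertices are joined by a path of length
at most 3. -/
theorem noncyclic_graph_connected_diam_le_three {G : Type*} [Group G]
    (hG : ∃ S : Finset G, ¬ IsCyclic ↥(Subgroup.closure (S : Set G))) :
    ∀ x y : G, x ∉ cycSet G → y ∉ cycSet G → x ≠ y →
      ncAdj x y ∨
      (∃ a, a ∉ cycSet G ∧ ncAdj x a ∧ ncAdj a y) ∨
      (∃ a b, a ∉ cycSet G ∧ b ∉ cycSet G ∧ ncAdj x a ∧ ncAdj a b ∧ ncAdj b y) := by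
  intro x y hx hy hxy
  by_cases hadj : IsCyclic ↥(Subgroup.closure ({x, y} : Set G))
  swap
  · exact Or.inl ⟨hxy, hadj⟩
  obtain ⟨c, hc⟩ := exists_zpowers_eq hadj
  have hxc : x ∈ Subgroup.zpowers c := hc ▸ mem_closure_pair_left x y
  have hyc : y ∈ Subgroup.zpowers c := hc ▸ mem_closure_pair_right x y
  -- `c` is not in `Cyc(G)`, otherwise `x` would be.
  have hccyc : c ∉ cycSet G := by
    intro h
    apply hx
    intro g
    refine isCyclic_of_le' (closure_pair_le (mem_closure_pair_left g c) ?_) (h g)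
    exact Subgroup.zpowers_le.2 (mem_closure_pair_right g c) hxc
  obtain ⟨z, hz⟩ : ∃ z, ¬ IsCyclic ↥(Subgroup.closure ({z, c} : Set G)) := by
    rw [cycSet, Set.mem_setOf_eq] at hccyc
    push_neg at hccyc
    exact hccyc
  have hcz : ¬ IsCyclic ↥(Subgroup.closure ({c, z} : Set G)) := by
    rwa [Set.pair_comm]
  by_cases hxz : IsCyclic ↥(Subgroup.closure ({x, z} : Set G))
  · -- `⟨x,z⟩` cyclic with generator `d`; then `⟨d,y⟩ ⊇ ⟨c,z⟩` is noncyclic.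
    obtain ⟨d, hd⟩ := exists_zpowers_eq hxz
    have hxd : x ∈ Subgroup.zpowers d := hd ▸ mem_closure_pair_left x z
    have hzd : z ∈ Subgroup.zpowers d := hd ▸ mem_closure_pair_right x z
    have hdy : ¬ IsCyclic ↥(Subgroup.closure ({d, y} : Set G)) := by
      intro h
      refine hcz (isCyclic_of_le' (closure_pair_le ?_ ?_) h)
      · refine closure_pair_le
          (Subgroup.zpowers_le.2 (mem_closure_pair_left d y) hxd)
          (mem_closure_pair_right d y) (hc ▸ Subgroup.mem_zpowers c)
      · exact Subgroup.zpowers_le.2 (mem_closure_pair_left d y) hzd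
    obtain ⟨w, hw⟩ : ∃ w, ¬ IsCyclic ↥(Subgroup.closure ({w, x} : Set G)) := by
      rw [cycSet, Set.mem_setOf_eq] at hx
      push_neg at hx
      exact hx
    have hxw : ¬ IsCyclic ↥(Subgroup.closure ({x, w} : Set G)) := by
      rwa [Set.pair_comm]
    have hwd : ¬ IsCyclic ↥(Subgroup.closure ({w, d} : Set G)) := by
      intro h
      refine hxw (isCyclic_of_le' (closure_pair_le ?_ ?_) h)
      · exact Subgroup.zpowers_le.2 (mem_closure_pair_right w d) hxd
      · exact mem_closure_pair_left w d
    refine Or.inr (Or.inr ⟨w, d, not_mem_cycSet hxw, ?_, ⟨ne_of_noncyc hxw, hxw⟩,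
      ⟨ne_of_noncyc hwd, hwd⟩, ⟨ne_of_noncyc hdy, hdy⟩⟩)
    exact not_mem_cycSet hwd
  · by_cases hyz : IsCyclic ↥(Subgroup.closure ({y, z} : Set G))
    · -- `⟨y,z⟩` cyclic with generator `e`; then `⟨x,e⟩ ⊇ ⟨c,z⟩` is noncyclic.
      obtain ⟨e, he⟩ := exists_zpowers_eq hyz
      have hye : y ∈ Subgroup.zpowers e := he ▸ mem_closure_pair_left y z
      have hze : z ∈ Subgroup.zpowers e := he ▸ mem_closure_pair_right y z
      have hxe : ¬ IsCyclic ↥(Subgroup.closure ({x, e} : Set G)) := by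
        intro h
        refine hcz (isCyclic_of_le' (closure_pair_le ?_ ?_) h)
        · refine closure_pair_le (mem_closure_pair_left x e)
            (Subgroup.zpowers_le.2 (mem_closure_pair_right x e) hye)
            (hc ▸ Subgroup.mem_zpowers c)
        · exact Subgroup.zpowers_le.2 (mem_closure_pair_right x e) hze
      obtain ⟨w, hw⟩ : ∃ w, ¬ IsCyclic ↥(Subgroup.closure ({w, y} : Set G)) := by
        rw [cycSet, Set.mem_setOf_eq] at hy
        push_neg at hy
        exact hy
      have hew : ¬ IsCyclic ↥(Subgroup.closure ({e, w} : Set G)) := by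
        intro h
        refine hw (isCyclic_of_le' (closure_pair_le ?_ ?_) h)
        · exact mem_closure_pair_right e w
        · exact Subgroup.zpowers_le.2 (mem_closure_pair_left e w) hye
      have hecyc : e ∉ cycSet G := not_mem_cycSet hxe
      have hwcyc : w ∉ cycSet G := by
        refine not_mem_cycSet (a := y) ?_
        rwa [Set.pair_comm]
      exact Or.inr (Or.inr ⟨e, w, hecyc, hwcyc, ⟨ne_of_noncyc hxe, hxe⟩,
        ⟨ne_of_noncyc hew, hew⟩, ⟨ne_of_noncyc hw, hw⟩⟩)
    · -- path of length two through `z`.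
      have hzy : ¬ IsCyclic ↥(Subgroup.closure ({z, y} : Set G)) := by
        rwa [Set.pair_comm]
      exact Or.inr (Or.inl ⟨z, not_mem_cycSet hxz, ⟨ne_of_noncyc hxz, hxz⟩,
        ⟨ne_of_noncyc hzy, hzy⟩⟩)
end

section
/- Let G be a group containing both an element of infinite order and a non-trivial element of finite order, and suppose G is not locally cyclic. Then the non-cyclic graph Γ_G has diameter exactly 2. -/
/-!
A cyclic group with a non-trivial element of finite order is finite, so an element `a` of infinite
order and a non-trivial torsion element `b` never generate a cyclic subgroup. Hence every
infinite-order element is adjacent to every non-trivial torsion element, and every vertex of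
`Γ_G` is one of the two (`1 ∈ Cyc(G)`): two vertices of the same kind have a common neighbour
(`b` or `a`), so the diameter is at most 2. It is exactly 2 because `a` and `a⁻¹` are distinct
vertices generating the cyclic group `⟨a⟩`.
-/

open Subgroup

theorem IsCyclic.isOfFinOrder_of_isOfFinOrder_ne_one {H : Type*} [Group H] [IsCyclic H] {b : H}
    (hb : IsOfFinOrder b) (hb1 : b ≠ 1) (a : H) : IsOfFinOrder a := by
  obtain ⟨g, hg⟩ := exists_zpow_surjective H
  obtain ⟨n, rfl⟩ := hg b
  obtain ⟨m, rfl⟩ := hg a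
  obtain ⟨k, hk0, hk⟩ := isOfFinOrder_iff_zpow_eq_one.mp hb
  have hn0 : n ≠ 0 := by rintro rfl; exact hb1 (zpow_zero g)
  have hg_fin : IsOfFinOrder g :=
    isOfFinOrder_iff_zpow_eq_one.mpr ⟨n * k, mul_ne_zero hn0 hk0, by rwa [zpow_mul]⟩
  exact hg_fin.zpow

section

variable {G : Type*} [Group G]

theorem not_isCyclic_closure_pair_of_not_isOfFinOrder {a b : G}
    (ha : ¬IsOfFinOrder a) (hb : IsOfFinOrder b) (hb1 : b ≠ 1) :
    ¬IsCyclic (closure ({a, b} : Set G)) := by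
  intro _
  let a' : closure ({a, b} : Set G) := ⟨a, subset_closure (by simp)⟩
  let b' : closure ({a, b} : Set G) := ⟨b, subset_closure (by simp)⟩
  have hb' : IsOfFinOrder b' := Submonoid.isOfFinOrder_coe.mp hb
  have hb1' : b' ≠ 1 := fun h => hb1 (congrArg Subtype.val h)
  exact ha <| Submonoid.isOfFinOrder_coe.mpr <|
    IsCyclic.isOfFinOrder_of_isOfFinOrder_ne_one hb' hb1' a'

theorem ncAdj_comm {x y : G} : ncAdj x y ↔ ncAdj y x := by
  rw [ncAdj, ncAdj, ne_comm, Set.pair_comm]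

theorem ncAdj_of_not_isOfFinOrder {a b : G} (ha : ¬IsOfFinOrder a) (hb : IsOfFinOrder b)
    (hb1 : b ≠ 1) : ncAdj a b :=
  ⟨fun h => ha (h ▸ hb), not_isCyclic_closure_pair_of_not_isOfFinOrder ha hb hb1⟩

theorem notMem_cycSet_of_ncAdj {x y : G} (h : ncAdj x y) : x ∉ cycSet G :=
  fun hx => (ncAdj_comm.mp h).2 (hx y)

theorem ne_one_of_notMem_cycSet {x : G} (hx : x ∉ cycSet G) : x ≠ 1 :=
  fun h => hx (h ▸ one_mem_cycSet)

theorem closure_pair_inv (a : G) : closure ({a, a⁻¹} : Set G) = zpowers a := by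
  rw [Set.insert_eq, Subgroup.closure_union, closure_singleton_inv, sup_idem, zpowers_eq_closure]

theorem ne_inv_of_not_isOfFinOrder {a : G} (ha : ¬IsOfFinOrder a) : a ≠ a⁻¹ := fun h =>
  ha <| isOfFinOrder_iff_pow_eq_one.mpr
    ⟨2, two_pos, by rw [pow_two, ← mul_inv_cancel a, ← h]⟩

theorem ncAdj_or_exists_common_ncAdj {a b : G} (ha : ¬IsOfFinOrder a) (hb : IsOfFinOrder b)
    (hb1 : b ≠ 1) {x y : G} (hx : x ∉ cycSet G) (hy : y ∉ cycSet G) :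
    ncAdj x y ∨ ∃ z, z ∉ cycSet G ∧ ncAdj x z ∧ ncAdj y z := by
  have hx1 := ne_one_of_notMem_cycSet hx
  have hy1 := ne_one_of_notMem_cycSet hy
  by_cases hxo : IsOfFinOrder x <;> by_cases hyo : IsOfFinOrder y
  · exact .inr ⟨a, notMem_cycSet_of_ncAdj (ncAdj_of_not_isOfFinOrder ha hb hb1),
      ncAdj_comm.mp (ncAdj_of_not_isOfFinOrder ha hxo hx1),
      ncAdj_comm.mp (ncAdj_of_not_isOfFinOrder ha hyo hy1)⟩
  · exact .inl (ncAdj_comm.mp (ncAdj_of_not_isOfFinOrder hyo hxo hx1))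
  · exact .inl (ncAdj_of_not_isOfFinOrder hxo hyo hy1)
  · exact .inr ⟨b, notMem_cycSet_of_ncAdj (ncAdj_comm.mp (ncAdj_of_not_isOfFinOrder ha hb hb1)),
      ncAdj_of_not_isOfFinOrder hxo hb hb1, ncAdj_of_not_isOfFinOrder hyo hb hb1⟩

theorem exists_not_ncAdj {a b : G} (ha : ¬IsOfFinOrder a) (hb : IsOfFinOrder b) (hb1 : b ≠ 1) :
    ∃ x y : G, x ∉ cycSet G ∧ y ∉ cycSet G ∧ x ≠ y ∧ ¬ncAdj x y := by
  have ha' : ¬IsOfFinOrder a⁻¹ := fun h => ha (isOfFinOrder_inv_iff.mp h)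
  refine ⟨a, a⁻¹, notMem_cycSet_of_ncAdj (ncAdj_of_not_isOfFinOrder ha hb hb1),
    notMem_cycSet_of_ncAdj (ncAdj_of_not_isOfFinOrder ha' hb hb1), ne_inv_of_not_isOfFinOrder ha,
    fun h => h.2 ?_⟩
  rw [closure_pair_inv]
  infer_instance

end

theorem noncyclic_graph_diam_two_of_mixed_general {G : Type*} [Group G]
    (hx : ∃ x : G, ¬ IsOfFinOrder x) (hy : ∃ y : G, y ≠ 1 ∧ IsOfFinOrder y) :
    (∀ x y : G, x ∉ cycSet G → y ∉ cycSet G → x ≠ y →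
      ncAdj x y ∨ ∃ z, z ∉ cycSet G ∧ ncAdj x z ∧ ncAdj y z) ∧
    (∃ x y : G, x ∉ cycSet G ∧ y ∉ cycSet G ∧ x ≠ y ∧ ¬ ncAdj x y) := by
  obtain ⟨a, ha⟩ := hx
  obtain ⟨b, hb1, hb⟩ := hy
  exact ⟨fun _ _ hx hy _ => ncAdj_or_exists_common_ncAdj ha hb hb1 hx hy,
    exists_not_ncAdj ha hb hb1⟩

/-- If `G` is neither torsion nor torsion-free and not locally cyclic, then
the non-cyclic graph of `G` has diameter exactly 2. -/
theorem noncyclic_graph_diam_two_of_mixed {G : Type*} [Group G]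
    (hx : ∃ x : G, ¬ IsOfFinOrder x) (hy : ∃ y : G, y ≠ 1 ∧ IsOfFinOrder y)
    (hG : ∃ S : Finset G, ¬ IsCyclic ↥(Subgroup.closure (S : Set G))) :
    (∀ x y : G, x ∉ cycSet G → y ∉ cycSet G → x ≠ y →
      ncAdj x y ∨ ∃ z, z ∉ cycSet G ∧ ncAdj x z ∧ ncAdj y z) ∧
    (∃ x y : G, x ∉ cycSet G ∧ y ∉ cycSet G ∧ x ≠ y ∧ ¬ ncAdj x y) :=
  noncyclic_graph_diam_two_of_mixed_general hx hy
end

section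
/- Let G = ℤ ⊕ ℤ. Then Cyc(G) = 0 and the non-cyclic graph of G has diameter 2: any two distinct non-zero non-adjacent elements have a common neighbor. -/
/-- If the determinant of `x, y` is nonzero, the subgroup they generate is not cyclic. -/
lemma det_ne_zero_not_cyclic {x y : ℤ × ℤ} (h : x.1 * y.2 - x.2 * y.1 ≠ 0) :
    ¬ IsAddCyclic ↥(AddSubgroup.closure ({x, y} : Set (ℤ × ℤ))) := by
  intro hc
  obtain ⟨g, hg⟩ := hc
  have hx : x ∈ AddSubgroup.closure ({x, y} : Set (ℤ × ℤ)) :=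
    AddSubgroup.subset_closure (by simp)
  have hy : y ∈ AddSubgroup.closure ({x, y} : Set (ℤ × ℤ)) :=
    AddSubgroup.subset_closure (by simp)
  obtain ⟨m, hm⟩ := hg ⟨x, hx⟩
  obtain ⟨n, hn⟩ := hg ⟨y, hy⟩
  have hm' : m • (g : ℤ × ℤ) = x := congrArg Subtype.val hm
  have hn' : n • (g : ℤ × ℤ) = y := congrArg Subtype.val hn
  apply h
  have hx1 : x.1 = m * (g : ℤ × ℤ).1 := by
    simpa [zsmul_eq_mul] using congrArg Prod.fst hm'.symm
  have hx2 : x.2 = m * (g : ℤ × ℤ).2 := by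
    simpa [zsmul_eq_mul] using congrArg Prod.snd hm'.symm
  have hy1 : y.1 = n * (g : ℤ × ℤ).1 := by
    simpa [zsmul_eq_mul] using congrArg Prod.fst hn'.symm
  have hy2 : y.2 = n * (g : ℤ × ℤ).2 := by
    simpa [zsmul_eq_mul] using congrArg Prod.snd hn'.symm
  rw [hx1, hx2, hy1, hy2]; ring

lemma closure_pair_zero_cyclic (x : ℤ × ℤ) :
    IsAddCyclic ↥(AddSubgroup.closure ({x, 0} : Set (ℤ × ℤ))) := by
  have hcl : AddSubgroup.closure ({x, 0} : Set (ℤ × ℤ)) = AddSubgroup.zmultiples x := by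
    apply le_antisymm
    · rw [AddSubgroup.closure_le]
      intro z hz
      rcases hz with h | h
      · exact h ▸ AddSubgroup.mem_zmultiples x
      · simp at h; simp [h, zero_mem]
    · intro z hz
      obtain ⟨n, hn⟩ := hz
      exact hn ▸ zsmul_mem (AddSubgroup.subset_closure (by simp)) n
  rw [hcl]
  refine ⟨⟨x, AddSubgroup.mem_zmultiples x⟩, ?_⟩
  rintro ⟨z, n, hn⟩
  exact ⟨n, Subtype.ext hn⟩

/-- For `G = ℤ ⊕ ℤ`: `Cyc(G) = 0` and the non-cyclic graph has diameter 2: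
any two distinct nonzero non-adjacent elements have a common neighbour. -/
theorem zz_cyc_trivial_and_diam_two :
    ({y : ℤ × ℤ | ∀ x : ℤ × ℤ, IsAddCyclic ↥(AddSubgroup.closure ({x, y} : Set (ℤ × ℤ)))}
      = ({0} : Set (ℤ × ℤ))) ∧
    (∀ x y : ℤ × ℤ, x ≠ 0 → y ≠ 0 → x ≠ y →
      IsAddCyclic ↥(AddSubgroup.closure ({x, y} : Set (ℤ × ℤ))) →
      ∃ z : ℤ × ℤ, z ≠ 0 ∧ z ≠ x ∧ z ≠ y ∧
        ¬ IsAddCyclic ↥(AddSubgroup.closure ({x, z} : Set (ℤ × ℤ))) ∧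
        ¬ IsAddCyclic ↥(AddSubgroup.closure ({y, z} : Set (ℤ × ℤ)))) := by
  constructor
  · ext y
    simp only [Set.mem_setOf_eq, Set.mem_singleton_iff]
    constructor
    · intro h
      by_contra hy
      rcases (by_cases (fun h1 : y.1 = 0 => Or.inr fun h2 => hy (Prod.ext h1 h2))
        (fun h1 => Or.inl h1) : y.1 ≠ 0 ∨ y.2 ≠ 0) with h1 | h2
      · exact det_ne_zero_not_cyclic (x := (0,1)) (y := y) (by simpa using h1) (h (0,1))
      · exact det_ne_zero_not_cyclic (x := (1,0)) (y := y) (by simpa using h2) (h (1,0))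
    · rintro rfl
      intro x
      exact closure_pair_zero_cyclic x
  · intro x y hx hy _ _
    -- find z among (1,0), (0,1), (1,1) with both determinants nonzero
    have hx' : x.1 ≠ 0 ∨ x.2 ≠ 0 := by
      rcases eq_or_ne x.1 0 with h1 | h1
      · exact Or.inr fun h2 => hx (Prod.ext h1 h2)
      · exact Or.inl h1
    have hy' : y.1 ≠ 0 ∨ y.2 ≠ 0 := by
      rcases eq_or_ne y.1 0 with h1 | h1
      · exact Or.inr fun h2 => hy (Prod.ext h1 h2)
      · exact Or.inl h1
    have key : ∃ z : ℤ × ℤ, x.1 * z.2 - x.2 * z.1 ≠ 0 ∧ y.1 * z.2 - y.2 * z.1 ≠ 0 := by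
      by_cases h1 : x.2 ≠ 0 ∧ y.2 ≠ 0
      · exact ⟨(1,0), by simpa using h1.1, by simpa using h1.2⟩
      · by_cases h2 : x.1 ≠ 0 ∧ y.1 ≠ 0
        · exact ⟨(0,1), by simpa using h2.1, by simpa using h2.2⟩
        · refine ⟨(1,1), ?_, ?_⟩ <;>
          · simp only [not_and_or, not_ne_iff] at h1 h2
            rcases hx' with a | a <;> rcases hy' with b | b <;>
              rcases h1 with c | c <;> rcases h2 with d | d <;> omega
    obtain ⟨z, hzx, hzy⟩ := key
    have hz0 : z ≠ 0 := by
      rintro rfl; simp at hzx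
    have hzx' : z ≠ x := by
      rintro rfl; exact hzx (by ring)
    have hzy' : z ≠ y := by
      rintro rfl; exact hzy (by ring)
    exact ⟨z, hz0, hzx', hzy', det_ne_zero_not_cyclic hzx, det_ne_zero_not_cyclic hzy⟩
end

section
/- The non-cyclic graph of ℤ ⊕ ℤ_p (for a prime p) contains an infinite clique; explicitly, the set {(pⁿ, 1) : n ∈ ℕ} is an infinite set of elements in which any two distinct elements generate a non-cyclic subgroup. -/
lemma aux_not_cyclic (p : ℕ) (hp : p.Prime) (m n : ℕ) (hmn : m < n) :
    ¬ IsAddCyclic ↥(AddSubgroup.closure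
      ({((p ^ m : ℤ), (1 : ZMod p)), ((p ^ n : ℤ), (1 : ZMod p))} : Set (ℤ × ZMod p))) := by
  haveI : Fact (1 < p) := ⟨hp.one_lt⟩
  intro h
  set H := AddSubgroup.closure
      ({((p ^ m : ℤ), (1 : ZMod p)), ((p ^ n : ℤ), (1 : ZMod p))} : Set (ℤ × ZMod p)) with hH
  have hx : ((p ^ m : ℤ), (1 : ZMod p)) ∈ H :=
    AddSubgroup.subset_closure (Set.mem_insert _ _)
  have hy : ((p ^ n : ℤ), (1 : ZMod p)) ∈ H :=
    AddSubgroup.subset_closure (Set.mem_insert_of_mem _ rfl)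
  have ht : ((0 : ℤ), (-1 : ZMod p)) ∈ H := by
    have hmem : ((p : ℤ) ^ (n - m)) • ((p ^ m : ℤ), (1 : ZMod p))
        - ((p ^ n : ℤ), (1 : ZMod p)) ∈ H :=
      H.sub_mem (H.zsmul_mem hx _) hy
    have heq : ((p : ℤ) ^ (n - m)) • ((p ^ m : ℤ), (1 : ZMod p))
        - ((p ^ n : ℤ), (1 : ZMod p)) = ((0 : ℤ), (-1 : ZMod p)) := by
      have h1 : (p : ℤ) ^ (n - m) * (p : ℤ) ^ m = (p : ℤ) ^ n := by
        rw [← pow_add, Nat.sub_add_cancel hmn.le]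
      have h2 : (((p : ℤ) ^ (n - m) : ℤ) : ZMod p) = 0 := by
        push_cast
        rw [ZMod.natCast_self]
        exact zero_pow (Nat.sub_ne_zero_of_lt hmn)
      ext
      · simp [smul_eq_mul, h1]
      · simp only [Prod.smul_snd, Prod.snd_sub]
        rw [zsmul_one, h2]
        ring
    rwa [heq] at hmem
  obtain ⟨g, hg⟩ := h
  obtain ⟨k, hk⟩ := AddSubgroup.mem_zmultiples_iff.mp (hg ⟨_, hx⟩)
  obtain ⟨l, hl⟩ := AddSubgroup.mem_zmultiples_iff.mp (hg ⟨_, ht⟩)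
  have hk' : k • (g : ℤ × ZMod p) = ((p ^ m : ℤ), (1 : ZMod p)) :=
    congrArg Subtype.val hk
  have hl' : l • (g : ℤ × ZMod p) = ((0 : ℤ), (-1 : ZMod p)) :=
    congrArg Subtype.val hl
  rw [Prod.ext_iff] at hk' hl'
  simp only [Prod.smul_fst, Prod.smul_snd, smul_eq_mul] at hk' hl'
  have ha : (g : ℤ × ZMod p).1 ≠ 0 := by
    intro h0
    rw [h0, mul_zero] at hk'
    exact (pow_ne_zero m (by exact_mod_cast hp.ne_zero : (p : ℤ) ≠ 0)) hk'.1.symm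
  have hl0 : l = 0 := by
    rcases mul_eq_zero.mp hl'.1 with h' | h'
    · exact h'
    · exact absurd h' ha
  rw [hl0, zero_smul] at hl'
  have : (-1 : ZMod p) = 0 := hl'.2.symm
  simp at this

/-- In `ℤ ⊕ ℤ_p`, the set `{(pⁿ, 1) : n ∈ ℕ}` is an infinite clique of the
non-cyclic graph. -/
theorem infinite_clique_in_Z_oplus_Zp (p : ℕ) (hp : p.Prime) :
    Set.Infinite {z : ℤ × ZMod p | ∃ n : ℕ, z = ((p ^ n : ℤ), (1 : ZMod p))} ∧
    ∀ m n : ℕ, m ≠ n →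
      ¬ IsAddCyclic ↥(AddSubgroup.closure
        ({((p ^ m : ℤ), (1 : ZMod p)), ((p ^ n : ℤ), (1 : ZMod p))} : Set (ℤ × ZMod p))) := by
  constructor
  · apply Set.infinite_of_injective_forall_mem
      (f := fun n : ℕ => (((p : ℤ) ^ n, (1 : ZMod p)) : ℤ × ZMod p))
    · intro i j hij
      have : (p : ℤ) ^ i = (p : ℤ) ^ j := (Prod.ext_iff.mp hij).1
      have hnat : p ^ i = p ^ j := by exact_mod_cast this
      exact Nat.pow_right_injective hp.two_le hnat
    · intro n
      exact ⟨n, rfl⟩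
  · intro m n hmn
    rcases hmn.lt_or_gt with h | h
    · exact aux_not_cyclic p hp m n h
    · rw [Set.pair_comm]
      exact aux_not_cyclic p hp n m h
end

section
/- Let G be a group with |G : Cyc(G)| finite, say of index n. Then any set of more than n elements of G contains two distinct elements generating a cyclic subgroup; i.e., the clique number of the non-cyclic graph of G is at most [G : Cyc(G)]. -/
/-- If `Cyc(G)` has finite index `n` in `G`, then any set of more than `n`
elements of `G` contains two distinct elements generating a cyclic subgroup;
i.e., the clique number of the non-cyclic graph is at most `[G : Cyc(G)]`. -/
theorem clique_number_le_index {G : Type*} [Group G] (N : Subgroup G)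
    (hN : (N : Set G) = cycSet G) {n : ℕ} (hn : N.index = n) (hn0 : n ≠ 0) :
    ∀ S : Finset G, n < S.card →
      ∃ x ∈ S, ∃ y ∈ S, x ≠ y ∧ IsCyclic ↥(Subgroup.closure ({x, y} : Set G)) := by
  intro S hS
  have hfin : Finite (G ⧸ N) := by
    have : Nat.card (G ⧸ N) ≠ 0 := by
      show N.index ≠ 0
      exact hn ▸ hn0
    exact Nat.finite_of_card_ne_zero this
  haveI := Fintype.ofFinite (G ⧸ N)
  classical
  have hcard : Fintype.card (G ⧸ N) = n := by
    rw [← Nat.card_eq_fintype_card, ← Subgroup.index, hn]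
  have hlt : (Finset.univ : Finset (G ⧸ N)).card * 1 < S.card := by
    simpa [hcard] using hS
  obtain ⟨q, -, hq⟩ := Finset.exists_lt_card_fiber_of_mul_lt_card_of_maps_to
    (fun a (_ : a ∈ S) => Finset.mem_univ ((a : G) : G ⧸ N)) hlt
  obtain ⟨x, hx, y, hy, hxy⟩ := Finset.one_lt_card.mp hq
  simp only [Finset.mem_filter] at hx hy
  refine ⟨x, hx.1, y, hy.1, hxy, ?_⟩
  have hmem : x⁻¹ * y ∈ N := by
    rw [← QuotientGroup.eq]
    rw [hx.2, hy.2]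
  have hc : x⁻¹ * y ∈ cycSet G := hN ▸ hmem
  have hcyc : IsCyclic ↥(Subgroup.closure ({x, x⁻¹ * y} : Set G)) := hc x
  have hle : Subgroup.closure ({x, y} : Set G) ≤ Subgroup.closure ({x, x⁻¹ * y} : Set G) := by
    rw [Subgroup.closure_le]
    intro z hz
    simp only [Set.mem_insert_iff, Set.mem_singleton_iff] at hz
    obtain hz | hz := hz <;> rw [hz]
    · exact Subgroup.subset_closure (Or.inl rfl)
    · have h1 : x ∈ Subgroup.closure ({x, x⁻¹ * y} : Set G) :=
        Subgroup.subset_closure (Or.inl rfl)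
      have h2 : x⁻¹ * y ∈ Subgroup.closure ({x, x⁻¹ * y} : Set G) :=
        Subgroup.subset_closure (Or.inr rfl)
      simpa using Subgroup.mul_mem _ h1 h2
  haveI := hcyc
  haveI : IsCyclic ↥((Subgroup.closure ({x, y} : Set G)).subgroupOf
      (Subgroup.closure ({x, x⁻¹ * y} : Set G))) := Subgroup.isCyclic _
  exact isCyclic_of_surjective (Subgroup.subgroupOfEquivOfLe hle)
    (Subgroup.subgroupOfEquivOfLe hle).surjective
end

section
/- Let G be a group of finite exponent e, not locally cyclic. Then every independent set in the non-cyclic graph of G has size at most e; moreover the independence number equals max{|x| : x ∈ G} − |Cyc(G)| when G is finite. -/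
/-- An independent set of the non-cyclic graph of `G`. -/
def ncIndep {G : Type*} [Group G] (X : Set G) : Prop :=
  X ⊆ (Set.univ \ cycSet G) ∧
    ∀ x ∈ X, ∀ y ∈ X, x ≠ y → IsCyclic ↥(Subgroup.closure ({x, y} : Set G))

/-!
Elements that pairwise generate cyclic subgroups commute, and in a torsion group finitely many of
them generate a cyclic subgroup. Inductively, if `a` is added to a set generating `⟨g⟩`, then
`|⟨a, g⟩| = |a| |g| / |⟨a⟩ ⊓ ⟨g⟩|`, while `⟨a⟩ ⊓ ⟨g⟩` contains every `⟨a⟩ ⊓ ⟨x⟩`, whose order is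
`gcd |a| |x|` because `⟨a, x⟩` is cyclic; so `|⟨a, g⟩| ≤ lcm |a| |g|`, the order of some element
of `⟨a, g⟩`. Hence an independent set together with `Cyc(G)` lies in a cyclic subgroup, of order
at most `e`, resp. at most the maximal order of an element. Conversely `Cyc(G) ⊆ ⟨x⟩` for `x` of
maximal order, and `⟨x⟩ \ Cyc(G)` is independent.
-/

open Subgroup

theorem Nat.gcd_lcm_distrib_left (a b c : ℕ) : a.gcd (b.lcm c) = (a.gcd b).lcm (a.gcd c) := by
  rcases eq_or_ne a 0 with rfl | ha
  · simp
  rcases eq_or_ne b 0 with rfl | hb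
  · simpa using (Nat.lcm_eq_left (Nat.gcd_dvd_left a c)).symm
  rcases eq_or_ne c 0 with rfl | hc
  · simpa using (Nat.lcm_eq_right (Nat.gcd_dvd_left a b)).symm
  have hab := Nat.gcd_ne_zero_left (n := b) ha
  have hac := Nat.gcd_ne_zero_left (n := c) ha
  refine Nat.eq_of_factorization_eq (Nat.gcd_ne_zero_left ha) (Nat.lcm_ne_zero hab hac) fun p => ?_
  simp only [Nat.factorization_gcd ha (Nat.lcm_ne_zero hb hc), Nat.factorization_lcm hab hac,
    Nat.factorization_lcm hb hc, Nat.factorization_gcd ha hb, Nat.factorization_gcd ha hc,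
    Finsupp.inf_apply, Finsupp.sup_apply]
  exact inf_sup_left _ _ _

theorem Nat.gcd_finset_lcm {ι : Type*} (m : ℕ) (s : Finset ι) (f : ι → ℕ) :
    m.gcd (s.lcm f) = s.lcm fun i => m.gcd (f i) := by
  classical
  induction s using Finset.induction_on with
  | empty => simp
  | insert i s _ ih => rw [Finset.lcm_insert, Finset.lcm_insert, lcm_eq_nat_lcm, lcm_eq_nat_lcm,
      Nat.gcd_lcm_distrib_left, ih]

theorem Subgroup.ncard_zpowers {α : Type*} [Group α] (x : α) :
    (zpowers x : Set α).ncard = orderOf x := by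
  rw [← Nat.card_coe_set_eq, SetLike.coe_sort_coe, Nat.card_zpowers]

theorem IsCyclic.zpowers_eq_zpowers_of_orderOf_eq {α : Type*} [Group α] [Finite α] [IsCyclic α]
    {x y : α} (h : orderOf x = orderOf y) : zpowers x = zpowers y := by
  classical
  have := Fintype.ofFinite α
  -- both subgroups fill up the solution set of `z ^ orderOf x = 1`, which is small in a
  -- cyclic group
  let T : Set α := {z | z ^ orderOf x = 1}
  have hT : T.ncard ≤ orderOf x := by
    rw [Set.ncard_eq_toFinset_card', Set.toFinset_ofPred]
    exact IsCyclic.card_pow_eq_one_le (orderOf_pos x)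
  have key : ∀ z : α, orderOf z = orderOf x → (zpowers z : Set α) = T := fun z hz =>
    Set.eq_of_subset_of_ncard_le
      (fun w hw => orderOf_dvd_iff_pow_eq_one.1 (hz ▸ orderOf_dvd_of_mem_zpowers hw))
      (by rwa [ncard_zpowers, hz])
      (Set.toFinite _)
  exact SetLike.coe_injective ((key x rfl).trans (key y h.symm).symm)

section

variable {G : Type*} [Group G]

theorem Subgroup.card_sup_mul_card_inf_of_commute {H K : Subgroup G}
    (hHK : ∀ h ∈ H, ∀ k ∈ K, Commute h k) :
    Nat.card ↥(H ⊔ K) * Nat.card ↥(H ⊓ K) = Nat.card H * Nat.card K := by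
  let φ := H.subtype.noncommCoprod K.subtype fun h k => hHK h h.2 k k.2
  have hrange : φ.range = H ⊔ K :=
    (MonoidHom.noncommCoprod_range _ _ _).trans (by rw [range_subtype, range_subtype])
  -- the kernel of `(h, k) ↦ h * k` consists of the pairs `(w, w⁻¹)` with `w ∈ H ⊓ K`
  let kerEquiv : φ.ker ≃ ↥(H ⊓ K) :=
    { toFun := fun t => ⟨t.1.1, t.1.1.2,
        (eq_inv_of_mul_eq_one_left (MonoidHom.mem_ker.1 t.2) : (t.1.1 : G) = _) ▸
          K.inv_mem t.1.2.2⟩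
      invFun := fun w => ⟨(⟨w, w.2.1⟩, ⟨w⁻¹, K.inv_mem w.2.2⟩),
        MonoidHom.mem_ker.2 (mul_inv_cancel (w : G))⟩
      left_inv := fun t => Subtype.ext (Prod.ext rfl (Subtype.ext
        (eq_inv_of_mul_eq_one_right (MonoidHom.mem_ker.1 t.2)).symm))
      right_inv := fun w => rfl }
  rw [← hrange, ← Nat.card_congr kerEquiv, ← index_ker, mul_comm, card_mul_index,
    Nat.card_prod]

theorem closure_pair_eq_zpowers_sup_zpowers (a g : G) :
    closure {a, g} = zpowers a ⊔ zpowers g := by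
  rw [Set.insert_eq, Subgroup.closure_union, zpowers_eq_closure, zpowers_eq_closure]

theorem Commute.of_isCyclic_closure_pair {x y : G} (h : IsCyclic (closure {x, y})) :
    Commute x y :=
  Subtype.ext_iff.1 (IsMulCommutative.is_comm.comm (⟨x, subset_closure (by simp)⟩ : closure {x, y})
    ⟨y, subset_closure (by simp)⟩)

namespace Commute

variable {a g : G}

theorem card_closure_pair_mul_card_inf (hc : Commute a g) :
    Nat.card (closure {a, g}) * Nat.card ↥(zpowers a ⊓ zpowers g) = orderOf a * orderOf g := by
  rw [closure_pair_eq_zpowers_sup_zpowers, card_sup_mul_card_inf_of_commute, Nat.card_zpowers,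
    Nat.card_zpowers]
  rintro _ ⟨i, rfl⟩ _ ⟨j, rfl⟩
  exact hc.zpow_zpow i j

theorem finite_closure_pair (hc : Commute a g) (ha : IsOfFinOrder a) (hg : IsOfFinOrder g) :
    Finite (closure {a, g}) :=
  Nat.finite_of_card_ne_zero <| left_ne_zero_of_mul <| hc.card_closure_pair_mul_card_inf ▸
    mul_ne_zero ha.orderOf_pos.ne' hg.orderOf_pos.ne'

theorem closure_pair_eq_zpowers_of_gcd_dvd (hc : Commute a g) (ha : IsOfFinOrder a)
    (hg : IsOfFinOrder g) (hd : (orderOf a).gcd (orderOf g) ∣ Nat.card ↥(zpowers a ⊓ zpowers g)) :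
    ∃ c, closure {a, g} = zpowers c ∧ orderOf c = (orderOf a).lcm (orderOf g) := by
  have := hc.finite_closure_pair ha hg
  have hprod := hc.card_closure_pair_mul_card_inf
  have hinf : Nat.card ↥(zpowers a ⊓ zpowers g) ≠ 0 := right_ne_zero_of_mul <| hprod ▸
    mul_ne_zero ha.orderOf_pos.ne' hg.orderOf_pos.ne'
  obtain ⟨c, hc_mem, hc_ord⟩ := hc.exists_orderOf_eq_lcm
  have hle : zpowers c ≤ closure {a, g} :=
    zpowers_le.2 <|
      (Submonoid.closure_le (S := (closure {a, g}).toSubmonoid)).2 subset_closure hc_mem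
  refine ⟨c, (eq_of_le_of_card_ge hle ?_).symm, hc_ord⟩
  rw [Nat.card_zpowers, hc_ord]
  refine Nat.le_of_mul_le_mul_right (c := (orderOf a).gcd (orderOf g)) ?_
    (Nat.gcd_pos_of_pos_left _ ha.orderOf_pos)
  calc Nat.card (closure {a, g}) * (orderOf a).gcd (orderOf g)
      ≤ Nat.card (closure {a, g}) * Nat.card ↥(zpowers a ⊓ zpowers g) :=
        Nat.mul_le_mul_left _ (Nat.le_of_dvd (Nat.pos_of_ne_zero hinf) hd)
    _ = (orderOf a).lcm (orderOf g) * (orderOf a).gcd (orderOf g) := by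
        rw [hprod, ← Nat.gcd_mul_lcm, mul_comm]

end Commute

theorem gcd_orderOf_dvd_card_zpowers_inf {a x : G} (ha : IsOfFinOrder a) (hx : IsOfFinOrder x)
    (h : IsCyclic (closure {a, x})) :
    (orderOf a).gcd (orderOf x) ∣ Nat.card ↥(zpowers a ⊓ zpowers x) := by
  set d := (orderOf a).gcd (orderOf x)
  have := (Commute.of_isCyclic_closure_pair h).finite_closure_pair ha hx
  set K := closure {a, x}
  have hu : a ^ (orderOf a / d) ∈ K := K.pow_mem (subset_closure (by simp)) _
  have hv : x ^ (orderOf x / d) ∈ K := K.pow_mem (subset_closure (by simp)) _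
  have hud : orderOf (a ^ (orderOf a / d)) = d :=
    orderOf_pow_orderOf_div ha.orderOf_pos.ne' (Nat.gcd_dvd_left _ _)
  have hvd : orderOf (x ^ (orderOf x / d)) = d :=
    orderOf_pow_orderOf_div hx.orderOf_pos.ne' (Nat.gcd_dvd_right _ _)
  have heq : zpowers (⟨_, hu⟩ : K) = zpowers ⟨_, hv⟩ :=
    IsCyclic.zpowers_eq_zpowers_of_orderOf_eq (by rw [orderOf_mk, orderOf_mk, hud, hvd])
  have hmem : a ^ (orderOf a / d) ∈ zpowers (x ^ (orderOf x / d)) := by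
    have := mem_map_of_mem K.subtype (heq ▸ mem_zpowers _ : (⟨_, hu⟩ : K) ∈ zpowers ⟨_, hv⟩)
    rwa [MonoidHom.map_zpowers] at this
  have hle : zpowers (a ^ (orderOf a / d)) ≤ zpowers a ⊓ zpowers x :=
    zpowers_le.2 ⟨npow_mem_zpowers _ _, zpowers_le.2 (npow_mem_zpowers _ _) hmem⟩
  simpa [Nat.card_zpowers, hud] using card_dvd_of_le hle

theorem exists_closure_eq_zpowers_of_pairwise_isCyclic (s : Finset G)
    (hs_fin : ∀ x ∈ s, IsOfFinOrder x)
    (hs : (s : Set G).Pairwise fun x y => IsCyclic (closure {x, y})) :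
    ∃ g, closure (s : Set G) = zpowers g ∧ orderOf g = s.lcm orderOf := by
  classical
  induction s using Finset.induction_on with
  | empty => exact ⟨1, by simp, by simp⟩
  | insert a s has ih =>
    obtain ⟨g, hgs, hg⟩ := ih (fun x hx => hs_fin x (Finset.mem_insert_of_mem hx))
      (hs.mono (by simp))
    have ha := hs_fin a (Finset.mem_insert_self a s)
    have hcyc : ∀ x ∈ s, IsCyclic (closure {a, x}) := fun x hx =>
      hs (by simp) (by simp [hx]) (ne_of_mem_of_not_mem hx has).symm
    have hcomm : Commute a g := by
      have hle : closure (s : Set G) ≤ centralizer {a} := (closure_le _).2 fun x hx =>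
        mem_centralizer_singleton_iff.2 (Commute.of_isCyclic_closure_pair (hcyc x hx)).symm.eq
      exact (mem_centralizer_singleton_iff.1 (hle (hgs ▸ mem_zpowers g))).symm
    have hg_fin : IsOfFinOrder g := by
      rw [← orderOf_pos_iff, hg, Nat.pos_iff_ne_zero, Ne, Finset.lcm_eq_zero_iff]
      rintro ⟨x, hx, h0⟩
      exact (hs_fin x (Finset.mem_insert_of_mem hx)).orderOf_pos.ne' h0
    have hd : (orderOf a).gcd (orderOf g) ∣ Nat.card ↥(zpowers a ⊓ zpowers g) := by
      rw [hg, Nat.gcd_finset_lcm]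
      refine Finset.lcm_dvd fun x hx => (gcd_orderOf_dvd_card_zpowers_inf ha
        (hs_fin x (Finset.mem_insert_of_mem hx)) (hcyc x hx)).trans (card_dvd_of_le ?_)
      exact inf_le_inf_left _ (zpowers_le.2 (hgs ▸ subset_closure hx))
    obtain ⟨c, hc, hco⟩ := hcomm.closure_pair_eq_zpowers_of_gcd_dvd ha hg_fin hd
    refine ⟨c, ?_, by rw [hco, hg, Finset.lcm_insert, lcm_eq_nat_lcm]⟩
    rw [Finset.coe_insert, Set.insert_eq, Subgroup.closure_union, hgs, ← zpowers_eq_closure,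
      ← closure_pair_eq_zpowers_sup_zpowers, hc]

theorem finite_and_ncard_le_of_pairwise_isCyclic (hG : IsMulTorsion G) {N : ℕ}
    (hN : ∀ g : G, orderOf g ≤ N) {X : Set G}
    (hX : X.Pairwise fun x y => IsCyclic (closure {x, y})) : X.Finite ∧ X.ncard ≤ N := by
  have hbound : ∀ t : Finset G, ↑t ⊆ X → t.card ≤ N := fun t ht => by
    obtain ⟨g, hg, -⟩ := exists_closure_eq_zpowers_of_pairwise_isCyclic t (fun x _ => hG x)
      (hX.mono ht)
    calc t.card = (t : Set G).ncard := (Set.ncard_coe_finset t).symm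
      _ ≤ (zpowers g : Set G).ncard :=
        Set.ncard_le_ncard (hg ▸ subset_closure) (hG g).finite_zpowers
      _ = orderOf g := ncard_zpowers g
      _ ≤ N := hN g
  have hX_fin : X.Finite := by
    by_contra hinf
    obtain ⟨t, htX, ht⟩ := Set.Infinite.exists_subset_card_eq hinf (N + 1)
    exact absurd (hbound t htX) (by omega)
  refine ⟨hX_fin, ?_⟩
  simpa [← Set.ncard_eq_toFinset_card _ hX_fin] using hbound hX_fin.toFinset (by simp)

theorem cycSet_subset_zpowers (hG : IsMulTorsion G) {x : G}
    (hx : ∀ g : G, orderOf g ≤ orderOf x) : cycSet G ⊆ zpowers x := by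
  intro y hy
  obtain ⟨ζ, hζ⟩ := (closure {x, y}).isCyclic_iff_exists_zpowers_eq_top.1 (hy x)
  have hle : zpowers x ≤ zpowers ζ := hζ ▸ zpowers_le.2 (subset_closure (by simp))
  have := (hG ζ).finite_zpowers.to_subtype
  have heq := eq_of_le_of_card_ge hle (by rw [Nat.card_zpowers, Nat.card_zpowers]; exact hx ζ)
  rw [SetLike.mem_coe, heq, hζ]
  exact subset_closure (by simp)

namespace ncIndep

variable {X : Set G}

theorem pairwise (hX : ncIndep X) : X.Pairwise fun x y => IsCyclic (closure {x, y}) := hX.2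

theorem pairwise_union_cycSet (hX : ncIndep X) :
    (X ∪ cycSet G).Pairwise fun x y => IsCyclic (closure {x, y}) := by
  rintro x (hx | hx) y (hy | hy) hxy
  · exact hX.pairwise hx hy hxy
  · exact hy x
  · exact Set.pair_comm x y ▸ hx y
  · exact hy x

theorem ncard_add_ncard_cycSet_le [Finite G] (hX : ncIndep X) {N : ℕ}
    (hN : ∀ g : G, orderOf g ≤ N) : X.ncard + (cycSet G).ncard ≤ N := by
  rw [← Set.ncard_union_eq (Set.disjoint_left.2 fun x hx => (hX.1 hx).2) (Set.toFinite _)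
    (Set.toFinite _)]
  exact (finite_and_ncard_le_of_pairwise_isCyclic isMulTorsion_of_finite hN
    hX.pairwise_union_cycSet).2

end ncIndep

theorem ncIndep_zpowers_diff_cycSet (x : G) : ncIndep ((zpowers x : Set G) \ cycSet G) :=
  ⟨fun _ hy => ⟨trivial, hy.2⟩, fun _ hy _ hz _ =>
    isCyclic_of_le ((closure_le _).2 (Set.insert_subset hy.1 (Set.singleton_subset_iff.2 hz.1)))⟩

end

theorem independence_number_of_finite_exponent_general {G : Type*} [Group G] {e : ℕ}
    (he : Monoid.exponent G = e) (he0 : e ≠ 0) :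
    (∀ X : Set G, ncIndep X → X.Finite ∧ X.ncard ≤ e) ∧
    (∀ _ : Finite G,
      IsGreatest {k : ℕ | ∃ X : Set G, ncIndep X ∧ X.ncard = k}
        (sSup (Set.range fun x : G => orderOf x) - (cycSet G).ncard)) := by
  have hexp : Monoid.ExponentExists G := Monoid.exponent_ne_zero.1 (he ▸ he0)
  have htor : IsMulTorsion G := ExponentExists.isMulTorsion hexp
  refine ⟨fun X hX => he ▸ finite_and_ncard_le_of_pairwise_isCyclic htor
    (Monoid.orderOf_le_exponent hexp) hX.pairwise, fun _ => ?_⟩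
  have hbdd : BddAbove (Set.range fun x : G => orderOf x) := (Set.finite_range _).bddAbove
  obtain ⟨x, hx⟩ : ∃ x : G, orderOf x = sSup (Set.range fun x : G => orderOf x) :=
    Nat.sSup_mem (Set.range_nonempty _) hbdd
  have hmax : ∀ g : G, orderOf g ≤ orderOf x := fun g => hx ▸ le_csSup hbdd ⟨g, rfl⟩
  rw [← hx]
  refine ⟨⟨_, ncIndep_zpowers_diff_cycSet x, ?_⟩, ?_⟩
  · rw [Set.ncard_sdiff (cycSet_subset_zpowers htor hmax), ncard_zpowers]
  · rintro k ⟨X, hX, rfl⟩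
    exact Nat.le_sub_of_add_le (hX.ncard_add_ncard_cycSet_le hmax)

/-- If `G` has finite exponent `e` and is not locally cyclic, then every
independent set of the non-cyclic graph has size at most `e`; moreover, when
`G` is finite, the independence number equals `max{|x| : x ∈ G} − |Cyc(G)|`. -/
theorem independence_number_of_finite_exponent {G : Type*} [Group G] {e : ℕ}
    (he : Monoid.exponent G = e) (he0 : e ≠ 0)
    (hG : ∃ S : Finset G, ¬ IsCyclic ↥(Subgroup.closure (S : Set G))) :
    (∀ X : Set G, ncIndep X → X.Finite ∧ X.ncard ≤ e) ∧
    (∀ _ : Finite G,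
      IsGreatest {k : ℕ | ∃ X : Set G, ncIndep X ∧ X.ncard = k}
        (sSup (Set.range fun x : G => orderOf x) - (cycSet G).ncard)) :=
  independence_number_of_finite_exponent_general he he0
end

section
/- Let G be a finite non-cyclic group. Then μ(G) ∩ π_e(Cyc(G)) = ∅, where π_e denotes the set of element orders and μ(G) the set of maximal element orders under divisibility. -/
/-- `μ(G)`: element orders of `G` maximal under divisibility. -/
def muSet (G : Type*) [Group G] : Set ℕ :=
  {n | (∃ g : G, orderOf g = n) ∧
    ∀ m : ℕ, (∃ g : G, orderOf g = m) → n ∣ m → n = m}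

/-- For a finite non-cyclic group `G`, `μ(G) ∩ π_e(Cyc(G)) = ∅`. -/
theorem mu_disjoint_orders_of_cyc {G : Type*} [Group G] [Fintype G]
    (hG : ¬ IsCyclic G) :
    muSet G ∩ {n | ∃ g ∈ cycSet G, orderOf g = n} = ∅ := by
  ext n
  simp only [Set.mem_inter_iff, Set.mem_setOf_eq, Set.mem_empty_iff_false, iff_false]
  rintro ⟨⟨-, hmax⟩, y, hy, rfl⟩
  apply hG
  refine ⟨⟨y, fun x => ?_⟩⟩
  set H := Subgroup.closure ({x, y} : Set G) with hH
  have hcyc : IsCyclic ↥H := hy x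
  obtain ⟨g, hg⟩ := hcyc.exists_generator
  have hyH : y ∈ H := Subgroup.subset_closure (by simp)
  have hxH : x ∈ H := Subgroup.subset_closure (by simp)
  set y' : H := ⟨y, hyH⟩ with hy'
  have hoy : orderOf y' = orderOf y := Subgroup.orderOf_mk y hyH
  have hog : orderOf (g : G) = orderOf g := Subgroup.orderOf_coe g
  have hdvd : orderOf y ∣ orderOf (g : G) := by
    rw [hog, ← hoy]
    exact orderOf_dvd_of_mem_zpowers (hg y')
  have heq : orderOf y = orderOf (g : G) := hmax _ ⟨g, rfl⟩ hdvd
  have hzp : Subgroup.zpowers y' = Subgroup.zpowers g := by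
    apply Subgroup.eq_of_le_of_card_ge ((Subgroup.zpowers_le).mpr (hg y'))
    rw [Nat.card_zpowers, Nat.card_zpowers, hoy, heq, hog]
  have hx' : (⟨x, hxH⟩ : H) ∈ Subgroup.zpowers y' := by
    rw [hzp]; exact hg _
  obtain ⟨k, hk⟩ := hx'
  refine ⟨k, ?_⟩
  have := congrArg (Subtype.val) hk
  simpa using this
end

section
/- Let G be a finite group and g ∈ G with |g| ∈ μ(G) (i.e., the order of g is maximal under divisibility among element orders). Then Cyc_G(g) = ⟨g⟩. -/
/-- If `g` is an element of a finite group `G` whose order is maximal under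
divisibility among element orders, then `Cyc_G(g) = ⟨g⟩`. -/
theorem cycOf_eq_zpowers_of_maximal_order {G : Type*} [Group G] [Fintype G]
    (g : G) (hg : ∀ m : ℕ, (∃ a : G, orderOf a = m) → orderOf g ∣ m → orderOf g = m) :
    cycOf g = (Subgroup.zpowers g : Set G) := by
  ext y
  constructor
  · intro hy
    obtain ⟨⟨c, hc⟩⟩ := hy
    have hgmem : g ∈ Subgroup.closure ({g, y} : Set G) :=
      Subgroup.subset_closure (Or.inl rfl)
    have hymem : y ∈ Subgroup.closure ({g, y} : Set G) :=
      Subgroup.subset_closure (Or.inr rfl)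
    have hgc : g ∈ Subgroup.zpowers (c : G) := by
      obtain ⟨k, hk⟩ := hc ⟨g, hgmem⟩
      exact ⟨k, by simpa using congrArg Subtype.val hk⟩
    have hyc : y ∈ Subgroup.zpowers (c : G) := by
      obtain ⟨k, hk⟩ := hc ⟨y, hymem⟩
      exact ⟨k, by simpa using congrArg Subtype.val hk⟩
    have hdvd : orderOf g ∣ orderOf (c : G) := orderOf_dvd_of_mem_zpowers hgc
    have heq := hg (orderOf (c : G)) ⟨c, rfl⟩ hdvd
    have hle : Subgroup.zpowers g ≤ Subgroup.zpowers (c : G) :=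
      (Subgroup.zpowers_le).mpr hgc
    have hkey : Subgroup.zpowers g = Subgroup.zpowers (c : G) :=
      Subgroup.eq_of_le_of_card_ge hle (by
        rw [Nat.card_zpowers, Nat.card_zpowers, heq])
    rw [SetLike.mem_coe, hkey]
    exact hyc
  · intro hy
    have h1 : Subgroup.closure ({g, y} : Set G) = Subgroup.zpowers g := by
      apply le_antisymm
      · rw [Subgroup.closure_le]
        rintro z (rfl | rfl)
        · exact Subgroup.mem_zpowers _
        · exact hy
      · rw [Subgroup.zpowers_le]
        exact Subgroup.subset_closure (Or.inl rfl)
    show IsCyclic _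
    rw [h1]
    exact ⟨⟨⟨g, Subgroup.mem_zpowers g⟩, fun z => by
      obtain ⟨k, hk⟩ := z.2
      exact ⟨k, Subtype.ext (by simpa using hk)⟩⟩⟩
end

section
/- For n > 2 odd, if G is a group of order 2n containing a cyclic subgroup A of order n such that C_G(b) = ⟨b⟩ for every involution b ∈ G, then G is isomorphic to the dihedral group D_{2n}. -/
/-- Any subgroup of index two is normal. -/
lemma normal_of_index_two' {G : Type*} [Group G] {H : Subgroup G}
    (h : H.index = 2) : H.Normal := by
  constructor
  intro x hx g
  have h1 : g * x * g⁻¹ ∈ H ↔ ((g * x ∈ H) ↔ g⁻¹ ∈ H) :=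
    Subgroup.mul_mem_iff_of_index_two h
  have h2 : g * x ∈ H ↔ (g ∈ H ↔ x ∈ H) := Subgroup.mul_mem_iff_of_index_two h
  rw [h1, h2]
  simp [hx, H.inv_mem_iff]

/-- For odd `n > 2`, a group of order `2n` with a cyclic subgroup of order `n`
in which every involution is self-centralizing is dihedral. -/
theorem dihedral_of_selfcentralizing_involutions {G : Type*} [Group G]
    {n : ℕ} (hn2 : 2 < n) (hodd : Odd n) (hcard : Nat.card G = 2 * n)
    (A : Subgroup G) (hA : IsCyclic A) (hAcard : Nat.card A = n)
    (hinv : ∀ b : G, orderOf b = 2 →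
      Subgroup.centralizer {b} = Subgroup.zpowers b) :
    Nonempty (G ≃* DihedralGroup n) := by
  have hn0 : n ≠ 0 := by omega
  have : NeZero n := ⟨hn0⟩
  have hGfin : Finite G := Nat.finite_of_card_ne_zero (by omega)
  -- A has index 2, hence is normal
  have hidx : A.index = 2 := by
    have h := Subgroup.card_mul_index A
    rw [hAcard, hcard] at h
    have h2 : n * A.index = n * 2 := by rw [h]; ring
    exact Nat.eq_of_mul_eq_mul_left (by omega) h2
  have hnormal : A.Normal := normal_of_index_two' hidx
  -- a generator `a` of `A`, of order `n`
  obtain ⟨g, hg⟩ := IsCyclic.exists_generator (α := A)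
  set a : G := (g : G) with ha_def
  have haA : a ∈ A := g.2
  have hord : orderOf a = n := by
    rw [ha_def, Subgroup.orderOf_coe, orderOf_eq_card_of_forall_mem_zpowers hg, hAcard]
  have hAz : ∀ x : G, x ∈ A → x ∈ Subgroup.zpowers a := by
    intro x hx
    obtain ⟨k, hk⟩ := hg ⟨x, hx⟩
    exact ⟨k, by simpa using congrArg Subtype.val hk⟩
  -- an involution `b`
  have : Fact (Nat.Prime 2) := ⟨Nat.prime_two⟩
  obtain ⟨b, hb⟩ := exists_prime_orderOf_dvd_card' (G := G) 2 (by rw [hcard]; exact ⟨n, rfl⟩)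
  have hbb : b * b = 1 := by
    have := pow_orderOf_eq_one b
    rwa [hb, pow_two] at this
  have hbinv : b⁻¹ = b := inv_eq_of_mul_eq_one_right hbb
  -- conjugation by b inverts a
  have hbab : b * a * b⁻¹ ∈ A := hnormal.conj_mem a haA b
  obtain ⟨k, hk⟩ := hAz _ hbab
  have hk : a ^ k = b * a * b⁻¹ := hk
  -- φ = conjugation by b
  set φ := MulAut.conj b with hφ_def
  have hφa : φ a = a ^ k := by rw [hφ_def, MulAut.conj_apply]; exact hk.symm
  have hφφ : ∀ x : G, φ (φ x) = x := by
    intro x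
    simp only [hφ_def, MulAut.conj_apply, hbinv]
    calc b * (b * x * b) * b = (b * b) * x * (b * b) := by group
      _ = x := by rw [hbb]; group
  have hkk : a = a ^ (k * k) := by
    have := hφφ a
    rw [hφa, map_zpow, hφa, ← zpow_mul] at this
    exact this.symm
  -- the element c = a^(k+1) is centralized by b and is a power of a, hence trivial
  set c : G := a ^ (k + 1) with hc_def
  have hφc : φ c = c := by
    rw [hc_def, map_zpow, hφa, ← zpow_mul]
    calc a ^ (k * (k + 1)) = a ^ (k * k) * a ^ k := by rw [← zpow_add]; congr 1; ring
      _ = a * a ^ k := by rw [← hkk]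
      _ = a ^ (k + 1) := by rw [zpow_add, zpow_one]; exact ((Commute.refl a).zpow_right k).eq
  have hbcb : b * c * b⁻¹ = c := by
    simpa [hφ_def, MulAut.conj_apply] using hφc
  have hcb : c ∈ Subgroup.centralizer {b} := by
    rw [Subgroup.mem_centralizer_iff]
    intro x hx
    rw [Set.mem_singleton_iff] at hx
    rw [hx]
    calc b * c = (b * c * b⁻¹) * b := by group
      _ = c * b := by rw [hbcb]
  rw [hinv b hb] at hcb
  obtain ⟨m, hm⟩ := hcb
  have hm : b ^ m = c := hm
  have hc2 : c ^ (2 : ℕ) = 1 := by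
    rw [← hm]
    have h2 : ((b ^ m) ^ (2 : ℕ) : G) = (b ^ (2 : ℕ)) ^ m := by
      rw [← zpow_natCast (b ^ m), ← zpow_mul, ← zpow_natCast b, ← zpow_mul, mul_comm]
    rw [h2, show b ^ (2 : ℕ) = 1 by rw [pow_two]; exact hbb, one_zpow]
  have hcn : c ^ (n : ℕ) = 1 := by
    have han : a ^ (n : ℕ) = 1 := by rw [← hord]; exact pow_orderOf_eq_one a
    rw [hc_def]
    have h2 : ((a ^ (k + 1)) ^ (n : ℕ) : G) = (a ^ (n : ℕ)) ^ (k + 1) := by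
      rw [← zpow_natCast (a ^ (k + 1)), ← zpow_mul, ← zpow_natCast a, ← zpow_mul, mul_comm]
    rw [h2, han, one_zpow]
  have hcord : orderOf c ∣ 2 := orderOf_dvd_of_pow_eq_one hc2
  have hcordn : orderOf c ∣ n := orderOf_dvd_of_pow_eq_one hcn
  have hc1 : c = 1 := by
    have h2 : orderOf c ∣ Nat.gcd 2 n := Nat.dvd_gcd hcord hcordn
    have hgcd : Nat.gcd 2 n = 1 := Nat.coprime_two_left.mpr hodd
    rw [hgcd, Nat.dvd_one] at h2
    exact orderOf_eq_one_iff.mp h2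
  -- key relation: b a b⁻¹ = a⁻¹
  have hkey : b * a * b⁻¹ = a⁻¹ := by
    have h1 : a ^ (k + 1) = 1 := hc1
    rw [zpow_add, zpow_one] at h1
    rw [← hk]
    exact eq_inv_of_mul_eq_one_left h1
  have hrel : ∀ m : ℕ, b * a ^ m * b⁻¹ = (a ^ m)⁻¹ := by
    intro m
    have : φ (a ^ m) = (a ^ m)⁻¹ := by
      rw [map_pow, show φ a = a⁻¹ from hkey, inv_pow]
    simpa [hφ_def, MulAut.conj_apply] using this
  have hrel' : ∀ m : ℕ, b * a ^ m = (a ^ m)⁻¹ * b := by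
    intro m
    rw [← hrel m]; group
  have hswap : ∀ m : ℕ, a ^ m * b = b * (a ^ m)⁻¹ := by
    intro m
    calc a ^ m * b = a ^ m * (b * a ^ m) * (a ^ m)⁻¹ := by group
      _ = a ^ m * ((a ^ m)⁻¹ * b) * (a ^ m)⁻¹ := by rw [hrel']
      _ = b * (a ^ m)⁻¹ := by group
  -- arithmetic of powers indexed by ZMod n
  have hpow : ∀ i j : ZMod n, a ^ (i + j).val = a ^ i.val * a ^ j.val := by
    intro i j
    rw [ZMod.val_add, ← pow_add]
    conv_rhs => rw [← pow_mod_orderOf]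
    rw [hord]
  have hneg : ∀ i : ZMod n, a ^ (-i).val = (a ^ i.val)⁻¹ := by
    intro i
    have h := hpow (-i) i
    rw [neg_add_cancel, ZMod.val_zero, pow_zero] at h
    exact eq_inv_of_mul_eq_one_left h.symm
  have hsub : ∀ i j : ZMod n, a ^ (j - i).val = a ^ j.val * (a ^ i.val)⁻¹ := by
    intro i j
    rw [sub_eq_add_neg, hpow, hneg]
  have hcomm : ∀ i j : ℕ, (a ^ i)⁻¹ * a ^ j = a ^ j * (a ^ i)⁻¹ := by
    intro i j
    exact (((Commute.refl a).pow_pow i j).inv_left).eq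
  -- the isomorphism
  let f : DihedralGroup n →* G :=
    { toFun := fun x => match x with
        | .r i => a ^ i.val
        | .sr i => b * a ^ i.val
      map_one' := by
        show a ^ (0 : ZMod n).val = 1
        simp
      map_mul' := by
        rintro (i | i) (j | j)
        · show a ^ (i + j).val = a ^ i.val * a ^ j.val
          exact hpow i j
        · show b * a ^ (j - i).val = a ^ i.val * (b * a ^ j.val)
          rw [hsub]
          calc b * (a ^ j.val * (a ^ i.val)⁻¹)
              = b * ((a ^ i.val)⁻¹ * a ^ j.val) := by rw [hcomm]
            _ = (b * (a ^ i.val)⁻¹) * a ^ j.val := by group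
            _ = (a ^ i.val * b) * a ^ j.val := by rw [hswap]
            _ = a ^ i.val * (b * a ^ j.val) := by group
        · show b * a ^ (i + j).val = (b * a ^ i.val) * a ^ j.val
          rw [hpow, mul_assoc]
        · show a ^ (j - i).val = (b * a ^ i.val) * (b * a ^ j.val)
          rw [hsub]
          calc a ^ j.val * (a ^ i.val)⁻¹
              = (a ^ i.val)⁻¹ * a ^ j.val := (hcomm _ _).symm
            _ = (b * b) * ((a ^ i.val)⁻¹ * a ^ j.val) := by rw [hbb]; group
            _ = b * (b * (a ^ i.val)⁻¹) * a ^ j.val := by group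
            _ = b * (a ^ i.val * b) * a ^ j.val := by rw [hswap]
            _ = (b * a ^ i.val) * (b * a ^ j.val) := by group }
  have hbnotpow : b ∉ Subgroup.zpowers a := by
    intro hmem
    have hdvd : orderOf b ∣ orderOf a := orderOf_dvd_of_mem_zpowers hmem
    rw [hb, hord] at hdvd
    rcases hodd with ⟨t, ht⟩
    omega
  have hrinj : ∀ i j : ZMod n, a ^ i.val = a ^ j.val → i = j := by
    intro i j h
    have hmod : i.val ≡ j.val [MOD orderOf a] := pow_eq_pow_iff_modEq.mp h
    rw [hord] at hmod
    have : i.val = j.val := by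
      have h1 := ZMod.val_lt i
      have h2 := ZMod.val_lt j
      unfold Nat.ModEq at hmod
      rwa [Nat.mod_eq_of_lt h1, Nat.mod_eq_of_lt h2] at hmod
    exact ZMod.val_injective n this
  have hinj : Function.Injective f := by
    rintro (i | i) (j | j) h
    · exact congrArg DihedralGroup.r (hrinj i j h)
    · exfalso
      apply hbnotpow
      have h' : b = a ^ i.val * (a ^ j.val)⁻¹ := by
        have : a ^ i.val = b * a ^ j.val := h
        rw [this]; group
      rw [h']
      exact Subgroup.mul_mem _ (Subgroup.pow_mem _ (Subgroup.mem_zpowers a) _)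
        (Subgroup.inv_mem _ (Subgroup.pow_mem _ (Subgroup.mem_zpowers a) _))
    · exfalso
      apply hbnotpow
      have h' : b = a ^ j.val * (a ^ i.val)⁻¹ := by
        have : b * a ^ i.val = a ^ j.val := h
        rw [← this]; group
      rw [h']
      exact Subgroup.mul_mem _ (Subgroup.pow_mem _ (Subgroup.mem_zpowers a) _)
        (Subgroup.inv_mem _ (Subgroup.pow_mem _ (Subgroup.mem_zpowers a) _))
    · have h' : a ^ i.val = a ^ j.val := by
        have : b * a ^ i.val = b * a ^ j.val := h
        exact mul_left_cancel this
      exact congrArg DihedralGroup.sr (hrinj i j h')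
  have hbij : Function.Bijective f := by
    rw [Nat.bijective_iff_injective_and_card]
    exact ⟨hinj, by rw [hcard, DihedralGroup.nat_card]⟩
  exact ⟨(MulEquiv.ofBijective f hbij).symm⟩
end
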